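/- arXiv:1501.03107 — 4 statements merged into one kernel-verified Lean document; each statement's English description precedes it below -/
import Mathlib

section
/- Fix integers q ≥ 2, r ≥ 2 and β > 0, and let z_β = (1/q, …, 1/q). Then lim_{z → z_β, z ∈ P, z ≠ z_β} ‖g^r(z) − g^r(z_β)‖₁ / ‖z − z_β‖₁ = β(r−1) q^{1−r}. In particular, if β(r−1)q^{1−r} < 1 (e.g. for r = 2 and β < q), then limsup_{z → z_β} ‖g^r(z) − g^r(z_β)‖₁/‖z − z_β‖₁ < 1. -/
open Filter

noncomputable section

/-- The probability simplex in `ℝ^q`. -/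
def simplexP (q : ℕ) : Set (Fin q → ℝ) :=
  {ν | (∀ k, 0 ≤ ν k) ∧ ∑ k, ν k = 1}

/-- `g_k^r(z) = e^{β z_k^{r−1}} / Σ_j e^{β z_j^{r−1}}` for the generalized
Curie–Weiss–Potts model. -/
def gGCWP (q r : ℕ) (β : ℝ) (z : Fin q → ℝ) (k : Fin q) : ℝ :=
  Real.exp (β * z k ^ (r - 1)) / ∑ j : Fin q, Real.exp (β * z j ^ (r - 1))

/-- The ℓ¹ norm on `ℝ^q`. -/
def l1 (q : ℕ) (x : Fin q → ℝ) : ℝ := ∑ k, |x k|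

/-- The equidistributed (single-phase equilibrium) point `z_β = (1/q,…,1/q)`. -/
def zUnif (q : ℕ) : Fin q → ℝ := fun _ => 1 / (q : ℝ)

theorem gcwp_hasFDerivAt (q r : ℕ) (hq : 2 ≤ q) (hr : 2 ≤ r) (β : ℝ) (hβ : 0 < β) :
    HasFDerivAt (fun (z : Fin q → ℝ) (k : Fin q) => gGCWP q r β z k)
      (ContinuousLinearMap.pi fun k : Fin q =>
        (β * ((r - 1 : ℕ) : ℝ) / (q : ℝ) ^ (r - 1)) • ContinuousLinearMap.proj k
          - ((β * ((r - 1 : ℕ) : ℝ) / (q : ℝ) ^ (r - 1)) / (q : ℝ)) •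
              ∑ j : Fin q, ContinuousLinearMap.proj (R := ℝ) (φ := fun _ : Fin q => ℝ) j)
      (zUnif q) := by
  have hq0 : (0 : ℝ) < (q : ℝ) := by positivity
  set Q : ℝ := (q : ℝ) with hQdef
  set a : ℝ := Real.exp (β * (1 / Q) ^ (r - 1)) with ha
  set c₀ : ℝ := a * (β * (((r - 1 : ℕ) : ℝ) * (1 / Q) ^ (r - 1 - 1))) with hc₀
  have ha0 : a ≠ 0 := Real.exp_ne_zero _
  apply hasFDerivAt_pi.2
  intro k
  have hu : ∀ j : Fin q, HasFDerivAt
      (fun z : Fin q → ℝ => Real.exp (β * z j ^ (r - 1)))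
      (c₀ • ContinuousLinearMap.proj (R := ℝ) (φ := fun _ : Fin q => ℝ) j) (zUnif q) := by
    intro j
    have h1 : HasDerivAt (fun t : ℝ => Real.exp (β * t ^ (r - 1))) c₀ (zUnif q j) := by
      have := ((hasDerivAt_pow (r - 1) (zUnif q j)).const_mul β).exp
      simpa [zUnif, ha, hc₀, mul_assoc] using this
    have hp : HasFDerivAt (fun z : Fin q → ℝ => z j)
        (ContinuousLinearMap.proj (R := ℝ) (φ := fun _ : Fin q => ℝ) j) (zUnif q) :=
      (ContinuousLinearMap.proj (R := ℝ) (φ := fun _ : Fin q => ℝ) j).hasFDerivAt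
    exact h1.comp_hasFDerivAt (f := fun z : Fin q → ℝ => z j) _ hp
  have hS : HasFDerivAt (fun z : Fin q → ℝ => ∑ j : Fin q, Real.exp (β * z j ^ (r - 1)))
      (∑ j : Fin q, c₀ • ContinuousLinearMap.proj (R := ℝ) (φ := fun _ : Fin q => ℝ) j)
      (zUnif q) := HasFDerivAt.fun_sum fun j _ => hu j
  have hSval : (∑ j : Fin q, Real.exp (β * zUnif q j ^ (r - 1))) = Q * a := by
    simp [zUnif, ha, Finset.sum_const, nsmul_eq_mul]
    rfl
  have hS0 : (∑ j : Fin q, Real.exp (β * zUnif q j ^ (r - 1))) ≠ 0 := by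
    rw [hSval]; positivity
  have hinv : HasFDerivAt
      (fun z : Fin q → ℝ => (∑ j : Fin q, Real.exp (β * z j ^ (r - 1)))⁻¹)
      ((-((∑ j : Fin q, Real.exp (β * zUnif q j ^ (r - 1))) ^ 2)⁻¹) •
        ∑ j : Fin q, c₀ • ContinuousLinearMap.proj (R := ℝ) (φ := fun _ : Fin q => ℝ) j)
      (zUnif q) := (hasDerivAt_inv hS0).comp_hasFDerivAt
      (f := fun z : Fin q → ℝ => ∑ j : Fin q, Real.exp (β * z j ^ (r - 1))) _ hS
  have hmul := (hu k).mul hinv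
  have hfun : (fun z : Fin q → ℝ => gGCWP q r β z k)
      = fun z : Fin q → ℝ => Real.exp (β * z k ^ (r - 1)) *
          (∑ j : Fin q, Real.exp (β * z j ^ (r - 1)))⁻¹ := by
    funext z; simp [gGCWP, div_eq_mul_inv]
  rw [hfun]
  refine HasFDerivAt.congr_fderiv hmul ?_
  refine ContinuousLinearMap.ext fun h => ?_
  obtain ⟨m, hm⟩ : ∃ m, r - 1 = m + 1 := ⟨r - 2, by omega⟩
  simp only [ContinuousLinearMap.sub_apply, ContinuousLinearMap.smul_apply,
    ContinuousLinearMap.proj_apply, ContinuousLinearMap.add_apply,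
    ContinuousLinearMap.coe_sum', Finset.sum_apply, smul_eq_mul, hSval]
  rw [← Finset.mul_sum]
  have hzk : Real.exp (β * zUnif q k ^ (r - 1)) = a := by simp [zUnif, ha]; exact Or.inl rfl
  rw [hzk, hc₀]
  simp only [hm, Nat.add_sub_cancel]
  push_cast
  field_simp
  have hQm : Q ^ m * Q⁻¹ ^ m = 1 := by rw [← mul_pow, mul_inv_cancel₀ hq0.ne', one_pow]
  linear_combination (Q ^ 2 * h k - Q * ∑ i, h i) * hQm

lemma l1_nonneg (q : ℕ) (x : Fin q → ℝ) : 0 ≤ l1 q x :=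
  Finset.sum_nonneg fun _ _ => abs_nonneg _

lemma l1_pos {q : ℕ} {x : Fin q → ℝ} (h : x ≠ 0) : 0 < l1 q x := by
  obtain ⟨k, hk⟩ := Function.ne_iff.1 h
  exact Finset.sum_pos' (fun _ _ => abs_nonneg _)
    ⟨k, Finset.mem_univ k, abs_pos.2 (by simpa using hk)⟩

lemma norm_le_l1 {q : ℕ} (x : Fin q → ℝ) : ‖x‖ ≤ l1 q x :=
  (pi_norm_le_iff_of_nonneg (l1_nonneg q x)).2 fun i => by
    simpa [Real.norm_eq_abs, l1] using
      Finset.single_le_sum (f := fun k => |x k|) (fun _ _ => abs_nonneg _) (Finset.mem_univ i)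

lemma l1_le {q : ℕ} (x : Fin q → ℝ) : l1 q x ≤ q * ‖x‖ := by
  calc l1 q x ≤ ∑ _k : Fin q, ‖x‖ :=
        Finset.sum_le_sum fun k _ => by
          simpa [Real.norm_eq_abs] using norm_le_pi_norm x k
    _ = q * ‖x‖ := by simp [Finset.sum_const, nsmul_eq_mul]

lemma l1_smul {q : ℕ} (a : ℝ) (x : Fin q → ℝ) : l1 q (a • x) = |a| * l1 q x := by
  simp [l1, abs_mul, Finset.mul_sum]

lemma abs_l1_sub_l1_le {q : ℕ} (x y : Fin q → ℝ) : |l1 q x - l1 q y| ≤ l1 q (x - y) := by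
  rw [l1, l1, l1, ← Finset.sum_sub_distrib]
  refine (Finset.abs_sum_le_sum_abs _ _).trans (Finset.sum_le_sum fun k _ => ?_)
  simpa using abs_abs_sub_abs_le_abs_sub (x k) (y k)

/-- **Local behavior of `g^r` near `z_β`** (Lemma 7.4 in the survey, via (7.6)):
`lim_{z→z_β, z∈P, z≠z_β} ‖g^r(z) − g^r(z_β)‖₁/‖z − z_β‖₁ = β(r−1)q^{1−r}`;
in particular if `β(r−1)q^{1−r} < 1` then the `limsup` is `< 1`. -/
theorem gcwp_local_limit (q r : ℕ) (hq : 2 ≤ q) (hr : 2 ≤ r) (β : ℝ) (hβ : 0 < β) :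
    Tendsto
      (fun z : Fin q → ℝ =>
        l1 q (fun k => gGCWP q r β z k - gGCWP q r β (zUnif q) k) / l1 q (z - zUnif q))
      (nhdsWithin (zUnif q) (simplexP q \ {zUnif q}))
      (nhds (β * ((r : ℝ) - 1) / (q : ℝ) ^ (r - 1))) ∧
    (β * ((r : ℝ) - 1) / (q : ℝ) ^ (r - 1) < 1 →
      ∃ c : ℝ, c < 1 ∧ ∃ ε : ℝ, 0 < ε ∧ ∀ z ∈ simplexP q, z ≠ zUnif q →
        l1 q (z - zUnif q) < ε →
          l1 q (fun k => gGCWP q r β z k - gGCWP q r β (zUnif q) k)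
            ≤ c * l1 q (z - zUnif q)) := by
  have hq0 : (0 : ℝ) < (q : ℝ) := by positivity
  set L : ℝ := β * ((r : ℝ) - 1) / (q : ℝ) ^ (r - 1) with hL
  have hLcast : L = β * (((r - 1 : ℕ) : ℝ)) / (q : ℝ) ^ (r - 1) := by
    rw [hL, Nat.cast_sub (by omega : 1 ≤ r)]; norm_num
  have hL0 : 0 ≤ L := by
    rw [hLcast]; positivity
  have hD := gcwp_hasFDerivAt q r hq hr β hβ
  set D := (ContinuousLinearMap.pi fun k : Fin q =>
        (β * ((r - 1 : ℕ) : ℝ) / (q : ℝ) ^ (r - 1)) • ContinuousLinearMap.proj k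
          - ((β * ((r - 1 : ℕ) : ℝ) / (q : ℝ) ^ (r - 1)) / (q : ℝ)) •
              ∑ j : Fin q, ContinuousLinearMap.proj (R := ℝ) (φ := fun _ : Fin q => ℝ) j)
    with hDdef
  set f : (Fin q → ℝ) → (Fin q → ℝ) := fun z k => gGCWP q r β z k with hf
  have hlo : (fun z => f z - f (zUnif q) - D (z - zUnif q)) =o[nhds (zUnif q)]
      fun z => z - zUnif q := hD.isLittleO
  set filt := nhdsWithin (zUnif q) (simplexP q \ {zUnif q}) with hfilt
  -- facts about points of the punctured simplex
  have hfacts : ∀ z : Fin q → ℝ, z ∈ simplexP q → z ≠ zUnif q →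
      0 < l1 q (z - zUnif q) ∧ D (z - zUnif q) = L • (z - zUnif q) := by
    intro z hzP hzne
    have hpos : 0 < l1 q (z - zUnif q) := l1_pos (sub_ne_zero.2 hzne)
    have hsum0 : ∑ j : Fin q, (z - zUnif q) j = 0 := by
      have h1 : ∑ j : Fin q, z j = 1 := hzP.2
      have : ∑ j : Fin q, (z - zUnif q) j
          = (∑ j : Fin q, z j) - ∑ _j : Fin q, 1 / (q : ℝ) := by
        rw [← Finset.sum_sub_distrib]; rfl
      rw [this, h1]
      field_simp
      rw [Finset.sum_const, Finset.card_univ, Fintype.card_fin, nsmul_eq_mul,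
        mul_one_div_cancel hq0.ne', sub_self]
    refine ⟨hpos, ?_⟩
    funext k
    have : D (z - zUnif q) k
        = (β * ((r - 1 : ℕ) : ℝ) / (q : ℝ) ^ (r - 1)) * (z - zUnif q) k
          - ((β * ((r - 1 : ℕ) : ℝ) / (q : ℝ) ^ (r - 1)) / (q : ℝ)) *
              ∑ j : Fin q, (z - zUnif q) j := by
      simp [hDdef, ContinuousLinearMap.pi_apply]
    rw [this, hsum0]
    simp [hLcast]
  have htend : Tendsto
      (fun z : Fin q → ℝ =>
        l1 q (fun k => gGCWP q r β z k - gGCWP q r β (zUnif q) k) / l1 q (z - zUnif q))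
      filt (nhds L) := by
    rw [Metric.tendsto_nhds]
    intro ε hε
    have hc : (0 : ℝ) < ε / (2 * q) := by positivity
    have h1 : ∀ᶠ z in filt,
        ‖f z - f (zUnif q) - D (z - zUnif q)‖ ≤ ε / (2 * q) * ‖z - zUnif q‖ :=
      (Asymptotics.isLittleO_iff.1 hlo hc).filter_mono nhdsWithin_le_nhds
    have h2 : ∀ᶠ z in filt, z ∈ simplexP q \ {zUnif q} := self_mem_nhdsWithin
    filter_upwards [h1, h2] with z hz hmem
    obtain ⟨hzP, hzne'⟩ := hmem
    have hzne : z ≠ zUnif q := hzne'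
    obtain ⟨hpos, hDz⟩ := hfacts z hzP hzne
    have hnum : (fun k => gGCWP q r β z k - gGCWP q r β (zUnif q) k)
        = f z - f (zUnif q) := rfl
    have key : |l1 q (f z - f (zUnif q)) - L * l1 q (z - zUnif q)|
        ≤ l1 q (f z - f (zUnif q) - L • (z - zUnif q)) := by
      have hsm : L * l1 q (z - zUnif q) = l1 q (L • (z - zUnif q)) := by
        rw [l1_smul, abs_of_nonneg hL0]
      rw [hsm]
      exact abs_l1_sub_l1_le _ _
    have hRb : l1 q (f z - f (zUnif q) - L • (z - zUnif q))
        ≤ ε / 2 * l1 q (z - zUnif q) := by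
      rw [← hDz]
      calc l1 q (f z - f (zUnif q) - D (z - zUnif q))
          ≤ q * ‖f z - f (zUnif q) - D (z - zUnif q)‖ := l1_le _
        _ ≤ q * (ε / (2 * q) * ‖z - zUnif q‖) := by
            exact mul_le_mul_of_nonneg_left hz (by positivity)
        _ ≤ q * (ε / (2 * q) * l1 q (z - zUnif q)) := by
            refine mul_le_mul_of_nonneg_left ?_ (by positivity)
            exact mul_le_mul_of_nonneg_left (norm_le_l1 _) (le_of_lt hc)
        _ = ε / 2 * l1 q (z - zUnif q) := by field_simp
    rw [Real.dist_eq, hnum]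
    have : l1 q (f z - f (zUnif q)) / l1 q (z - zUnif q) - L
        = (l1 q (f z - f (zUnif q)) - L * l1 q (z - zUnif q)) / l1 q (z - zUnif q) := by
      field_simp
    rw [this, abs_div, abs_of_pos hpos]
    calc |l1 q (f z - f (zUnif q)) - L * l1 q (z - zUnif q)| / l1 q (z - zUnif q)
        ≤ (ε / 2 * l1 q (z - zUnif q)) / l1 q (z - zUnif q) := by
          gcongr
          exact key.trans hRb
      _ = ε / 2 := by field_simp
      _ < ε := by linarith
  refine ⟨htend, fun hL1 => ?_⟩
  set c : ℝ := (L + 1) / 2 with hc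
  have hcL : L < c := by rw [hc]; linarith
  have hc1 : c < 1 := by rw [hc]; linarith
  have hev : ∀ᶠ z in filt,
      dist (l1 q (fun k => gGCWP q r β z k - gGCWP q r β (zUnif q) k) / l1 q (z - zUnif q))
        L < c - L := (Metric.tendsto_nhds.1 htend) (c - L) (by linarith)
  rw [eventually_nhdsWithin_iff, Metric.eventually_nhds_iff] at hev
  obtain ⟨δ, hδ, H⟩ := hev
  refine ⟨c, hc1, δ, hδ, fun z hzP hzne hl1 => ?_⟩
  obtain ⟨hpos, _⟩ := hfacts z hzP hzne
  have hdz : dist z (zUnif q) < δ := by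
    rw [dist_eq_norm]
    exact lt_of_le_of_lt (norm_le_l1 _) hl1
  have hz := H hdz ⟨hzP, hzne⟩
  rw [Real.dist_eq] at hz
  have hlt : l1 q (fun k => gGCWP q r β z k - gGCWP q r β (zUnif q) k) / l1 q (z - zUnif q)
      < c := by
    have := abs_lt.1 hz
    linarith [this.2]
  have := (div_lt_iff₀ hpos).1 hlt
  linarith

end
end

section
/- Fix integers q ≥ 2, r ≥ 2 and β > 0, and suppose g_k^r(z) < z_k for every z ∈ P and every k with z_k ∈ (1/q, 1] (which holds whenever β < β_s(q,r)). Then for every z ∈ P with z ≠ z_β, the straight-line path z(t) = (1−t)z_β + t z, t ∈ [0,1], satisfies Σ_{k=1}^q ∫₀¹ |d/dt [g_k^r(z(t))]| dt < ‖z − z_β‖₁; i.e. the aggregate g-variation along the straight line from z_β to z is strictly less than ‖z − z_β‖₁. -/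
/-!
Along the segment `x(t) = (1 - t) z_β + t z` one has
`d/dt g_k(x(t)) = β (r - 1) g_k (w_k - w̄)` with `w_j = x_j^(r-2) (z_j - 1/q)` and `w̄` the
`g`-average of the `w_j`. Chebyshev's sum inequality gives `w̄ ≥ 0`, so `g_k` decreases along
the segment when `z_k ≤ 1/q`. When `z_k > 1/q`, the gap `w̄ - w_k` starts negative and has
positive derivative at each of its zeros: the `g`-variance of the `w_j` is positive, and a
tangent-line inequality for the curve `y ↦ (y^(r-2) (y - 1/q), y^(r-3) (y - 1/q)^2)` controls
the remaining term. Hence `g_k` rises up to some `τ` and then falls, its variation is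
`2 g_k(τ) - g_k(0) - g_k(1)`, and `g_k(τ) < x_k(τ) ≤ z_k` by hypothesis. Summing over `k`, with
`Σ_k g_k = 1` at both ends, the total variation is `< Σ_k (|z_k - 1/q| + (z_k - 1/q))`, which
is `‖z - z_β‖₁`.
-/

noncomputable section

open Set

theorem integral_abs_eq_of_unimodal {f f' : ℝ → ℝ} {a τ b : ℝ}
    (hf : ∀ t, HasDerivAt f (f' t) t) (hf' : Continuous f') (haτ : a ≤ τ) (hτb : τ ≤ b)
    (hup : ∀ t ∈ Ioo a τ, 0 ≤ f' t) (hdown : ∀ t ∈ Ioo τ b, f' t ≤ 0) :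
    ∫ t in a..b, |f' t| = 2 * f τ - f a - f b := by
  have ftc (u v : ℝ) : ∫ t in u..v, f' t = f v - f u :=
    intervalIntegral.integral_eq_sub_of_hasDerivAt (fun t _ => hf t) (hf'.intervalIntegrable u v)
  have congr_Ioo {u v : ℝ} {g : ℝ → ℝ} (huv : u ≤ v)
      (h : EqOn (fun t => |f' t|) g (Ioo u v)) :
      ∫ t in u..v, |f' t| = ∫ t in u..v, g t := by
    rw [intervalIntegral.integral_of_le huv, intervalIntegral.integral_of_le huv,
      MeasureTheory.integral_Ioc_eq_integral_Ioo, MeasureTheory.integral_Ioc_eq_integral_Ioo]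
    exact MeasureTheory.setIntegral_congr_fun measurableSet_Ioo h
  rw [← intervalIntegral.integral_add_adjacent_intervals (hf'.abs.intervalIntegrable a τ)
      (hf'.abs.intervalIntegrable τ b),
    congr_Ioo haτ fun t ht => abs_of_nonneg (hup t ht),
    congr_Ioo hτb fun t ht => abs_of_nonpos (hdown t ht), intervalIntegral.integral_neg, ftc, ftc]
  ring

theorem exists_sign_change_of_deriv_pos_at_zero {D D' : ℝ → ℝ}
    (hD : ∀ t, HasDerivAt D (D' t) t) (h0 : D 0 < 0)
    (hzero : ∀ t ∈ Ioo 0 1, D t = 0 → 0 < D' t) :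
    ∃ τ ∈ Icc (0 : ℝ) 1, (∀ t ∈ Ioo 0 τ, D t ≤ 0) ∧ ∀ t ∈ Ioo τ 1, 0 ≤ D t := by
  -- `1 ∈ S` makes `τ = 1` when `D < 0` on all of `[0, 1]`.
  set S : Set ℝ := insert 1 {t | t ∈ Icc 0 1 ∧ 0 ≤ D t}
  have hS0 : ∀ t ∈ S, 0 ≤ t := by
    rintro t (rfl | ⟨ht, -⟩)
    exacts [zero_le_one, ht.1]
  have hS1 : (1 : ℝ) ∈ S := mem_insert 1 _
  have hτ1 : sInf S ≤ 1 := csInf_le ⟨0, hS0⟩ hS1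
  refine ⟨sInf S, ⟨le_csInf ⟨1, hS1⟩ hS0, hτ1⟩, fun t ht => ?_, fun t ht => ?_⟩
  · by_contra! hpos
    exact ht.2.not_ge
      (csInf_le ⟨0, hS0⟩ (Or.inr ⟨⟨ht.1.le, ht.2.le.trans hτ1⟩, hpos.le⟩))
  · obtain ⟨s, hs | ⟨hs01, hDs⟩, hst⟩ := exists_lt_of_csInf_lt ⟨1, hS1⟩ ht.1
    · exact absurd (hs ▸ hst) ht.2.not_gt
    have hs0 : 0 < s := hs01.1.lt_of_ne (by rintro rfl; exact h0.not_ge hDs)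
    -- Fencing: `-D ≤ 0` at `s`, and `-D` has negative slope wherever it vanishes.
    have := image_le_of_deriv_right_lt_deriv_boundary (f := fun u => -D u) (f' := fun u => -D' u)
      (B := fun _ => 0) (B' := fun _ => 0)
      (fun u _ => (hD u).continuousAt.neg.continuousWithinAt)
      (fun u _ => (hD u).neg.hasDerivWithinAt) (neg_nonpos.2 hDs) (fun _ => hasDerivAt_const _ _)
      (fun u hu hDu =>
        neg_neg_iff_pos.2 (hzero u ⟨hs0.trans_le hu.1, hu.2⟩ (neg_eq_zero.1 hDu)))
      ⟨hst.le, ht.2.le⟩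
    exact neg_nonpos.1 this

/-- The coefficients are `x φ'(x)` and `x ρ'(x)` for `φ y = y ^ (m + 1) * (y - c)` and
`ρ y = y ^ m * (y - c) ^ 2`, so `tangentGap_self_le` says that the curve `y ↦ (φ y, ρ y)`,
`y ≥ 0`, lies above its tangent line at `x`. -/
def tangentGap (m : ℕ) (c x y : ℝ) : ℝ :=
  x ^ (m + 1) * ((m + 2) * x - (m + 1) * c) * (y ^ m * (y - c) ^ 2)
    - x ^ m * (x - c) * ((m + 2) * x - m * c) * (y ^ (m + 1) * (y - c))

lemma exists_hasDerivAt_tangentGap (m : ℕ) (c x y : ℝ) :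
    ∃ T', HasDerivAt (tangentGap m c x) T' y ∧ y * T' = x ^ m * y ^ m * c * (y - x) *
      ((m + 1) * (m + 2) * x * y - m * (m + 2) * c * (x + y) + m * (m + 1) * c ^ 2) := by
  have hc : HasDerivAt (fun y : ℝ => y - c) 1 y := (hasDerivAt_id y).sub_const c
  have hc2 : HasDerivAt (fun y : ℝ => (y - c) ^ 2) (2 * (y - c)) y := by
    simpa using hc.fun_pow 2
  refine ⟨_, ((((hasDerivAt_pow m y).mul hc2).const_mul _).sub
    (((hasDerivAt_pow (m + 1) y).mul hc).const_mul _)), ?_⟩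
  have hpow : y * (m * y ^ (m - 1)) = m * y ^ m := by
    cases m with
    | zero => simp
    | succ n => simp [pow_succ]; ring
  push_cast
  simp only [mul_one]
  linear_combination (x ^ (m + 1) * ((m + 2) * x - (m + 1) * c) * (y - c) ^ 2) * hpow

lemma sub_mul_deriv_tangentGap_nonneg {m : ℕ} {c x v : ℝ} (hc : 0 < c) (hx : c < x)
    (hv : c < v) :
    0 ≤ (v - x) * deriv (tangentGap m c x) v := by
  obtain ⟨T', hT', hvT'⟩ := exists_hasDerivAt_tangentGap m c x v
  have hx0 : 0 < x := hc.trans hx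
  have hv0 : 0 < v := hc.trans hv
  have hQ : 0 < (m + 1) * (m + 2) * x * v - m * (m + 2) * c * (x + v) + m * (m + 1) * c ^ 2 := by
    rw [show (m + 1) * (m + 2) * x * v - m * (m + 2) * c * (x + v) + m * (m + 1) * c ^ 2
        = 2 * c ^ 2 + (m + 2) * c * ((x - c) + (v - c)) + (m + 1) * (m + 2) * (x - c) * (v - c) by
      ring]
    have := sub_pos.2 hx
    have := sub_pos.2 hv
    positivity
  have hmul : 0 ≤ v * ((v - x) * T') := by
    rw [mul_left_comm, hvT']
    have : 0 ≤ x ^ m * v ^ m * c := by positivity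
    nlinarith [mul_nonneg this (mul_self_nonneg (v - x))]
  rw [hT'.deriv]
  exact nonneg_of_mul_nonneg_right hmul hv0

lemma tangentGap_self_le {m : ℕ} {c x y : ℝ} (hc : 0 < c) (hx : c < x) (hy : 0 ≤ y) :
    tangentGap m c x x ≤ tangentGap m c x y := by
  have hx0 : 0 < x := hc.trans hx
  rcases le_or_gt y c with hyc | hcy
  · have hm : (0 : ℝ) ≤ m := m.cast_nonneg
    have hA : 0 < x ^ (m + 1) * ((m + 2) * x - (m + 1) * c) :=
      mul_pos (pow_pos hx0 _) (by nlinarith)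
    have hB : 0 < x ^ m * (x - c) * ((m + 2) * x - m * c) :=
      mul_pos (mul_pos (pow_pos hx0 _) (sub_pos.2 hx)) (by nlinarith)
    have h1 : 0 ≤ y ^ m * (y - c) ^ 2 := by positivity
    have h2 : y ^ (m + 1) * (y - c) ≤ 0 :=
      mul_nonpos_of_nonneg_of_nonpos (pow_nonneg hy _) (sub_nonpos.2 hyc)
    have hTx : tangentGap m c x x = -(c * x ^ (2 * m + 1) * (x - c) ^ 2) := by
      rw [tangentGap]; ring
    rw [hTx, tangentGap]
    nlinarith [mul_nonneg hA.le h1, mul_nonpos_of_nonneg_of_nonpos hB.le h2,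
      show 0 ≤ c * x ^ (2 * m + 1) * (x - c) ^ 2 by positivity]
  have hdiff : Differentiable ℝ (tangentGap m c x) := fun v =>
    (exists_hasDerivAt_tangentGap m c x v).choose_spec.1.differentiableAt
  rcases le_total y x with hyx | hxy
  · refine antitoneOn_of_deriv_nonpos (convex_Icc c x) hdiff.continuous.continuousOn
      hdiff.differentiableOn (fun v hv => ?_) ⟨hcy.le, hyx⟩ ⟨hx.le, le_rfl⟩ hyx
    rw [interior_Icc] at hv
    nlinarith [sub_mul_deriv_tangentGap_nonneg (m := m) hc hx hv.1, hv.2]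
  · refine monotoneOn_of_deriv_nonneg (convex_Ici x) hdiff.continuous.continuousOn
      hdiff.differentiableOn (fun v hv => ?_) self_mem_Ici hxy hxy
    rw [interior_Ici] at hv
    nlinarith [sub_mul_deriv_tangentGap_nonneg (m := m) hc hx (hx.trans hv), mem_Ioi.1 hv]

theorem pow_mul_sub_sq_le_sum_of_sum_eq {ι : Type*} {s : Finset ι} {p y : ι → ℝ} {m : ℕ}
    {c x : ℝ} (hp : ∀ i ∈ s, 0 ≤ p i) (hp1 : ∑ i ∈ s, p i = 1) (hy : ∀ i ∈ s, 0 ≤ y i)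
    (hc : 0 < c) (hx : c < x)
    (hφ : ∑ i ∈ s, p i * (y i ^ (m + 1) * (y i - c)) = x ^ (m + 1) * (x - c)) :
    x ^ m * (x - c) ^ 2 ≤ ∑ i ∈ s, p i * (y i ^ m * (y i - c) ^ 2) := by
  have hA : 0 < x ^ (m + 1) * ((m + 2) * x - (m + 1) * c) :=
    mul_pos (pow_pos (hc.trans hx) _) (by nlinarith [(m.cast_nonneg : (0 : ℝ) ≤ m)])
  have hsum : tangentGap m c x x ≤ ∑ i ∈ s, p i * tangentGap m c x (y i) :=
    calc tangentGap m c x x = ∑ i ∈ s, p i * tangentGap m c x x := by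
          rw [← Finset.sum_mul, hp1, one_mul]
      _ ≤ _ := Finset.sum_le_sum fun i hi =>
          mul_le_mul_of_nonneg_left (tangentGap_self_le hc hx (hy i hi)) (hp i hi)
  have hexpand : ∑ i ∈ s, p i * tangentGap m c x (y i)
      = x ^ (m + 1) * ((m + 2) * x - (m + 1) * c) * ∑ i ∈ s, p i * (y i ^ m * (y i - c) ^ 2)
        - x ^ m * (x - c) * ((m + 2) * x - m * c) *
            ∑ i ∈ s, p i * (y i ^ (m + 1) * (y i - c)) := by
    simp only [tangentGap, Finset.mul_sum, ← Finset.sum_sub_distrib]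
    exact Finset.sum_congr rfl fun i _ => by ring
  rw [hexpand, hφ, tangentGap] at hsum
  exact le_of_mul_le_mul_left (by linarith) hA

namespace GCWP

variable {q r : ℕ} {β : ℝ}

lemma gGCWP_pos (x : Fin q → ℝ) (k : Fin q) : 0 < gGCWP q r β x k :=
  div_pos (Real.exp_pos _) (Finset.sum_pos (fun _ _ => Real.exp_pos _) ⟨k, Finset.mem_univ k⟩)

lemma sum_gGCWP [NeZero q] (x : Fin q → ℝ) : ∑ k, gGCWP q r β x k = 1 := by
  have hZ : 0 < ∑ j : Fin q, Real.exp (β * x j ^ (r - 1)) :=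
    Finset.sum_pos (fun _ _ => Real.exp_pos _) Finset.univ_nonempty
  simp only [gGCWP, ← Finset.sum_div, div_self hZ.ne']

lemma gGCWP_zUnif (k : Fin q) : gGCWP q r β (zUnif q) k = 1 / q := by
  have : (q : ℝ) ≠ 0 := Nat.cast_ne_zero.2 k.pos.ne'
  simp only [gGCWP, zUnif, Finset.sum_const, Finset.card_univ, Fintype.card_fin, nsmul_eq_mul]
  field_simp

theorem hasDerivAt_gGCWP {x : ℝ → Fin q → ℝ} {x' : Fin q → ℝ} {t : ℝ}
    (hx : ∀ j, HasDerivAt (fun s => x s j) (x' j) t) (k : Fin q) :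
    HasDerivAt (fun s => gGCWP q r β (x s) k)
      (β * (r - 1 : ℕ) * gGCWP q r β (x t) k *
        (x t k ^ (r - 2) * x' k - ∑ j, gGCWP q r β (x t) j * (x t j ^ (r - 2) * x' j))) t := by
  have hexp (j : Fin q) : HasDerivAt (fun s => Real.exp (β * x s j ^ (r - 1)))
      (Real.exp (β * x t j ^ (r - 1)) * (β * (r - 1 : ℕ) * (x t j ^ (r - 2) * x' j))) t := by
    convert ((((hx j).fun_pow (r - 1)).const_mul β).exp) using 1
    rw [Nat.sub_sub]
    ring
  have hZ : 0 < ∑ j : Fin q, Real.exp (β * x t j ^ (r - 1)) :=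
    Finset.sum_pos (fun _ _ => Real.exp_pos _) ⟨k, Finset.mem_univ k⟩
  refine ((hexp k).fun_div (HasDerivAt.fun_sum fun j _ => hexp j) hZ.ne').congr_deriv ?_
  have hmean : ∑ j, gGCWP q r β (x t) j * (x t j ^ (r - 2) * x' j)
      = (∑ j, Real.exp (β * x t j ^ (r - 1)) * (x t j ^ (r - 2) * x' j)) /
        ∑ j : Fin q, Real.exp (β * x t j ^ (r - 1)) := by
    simp only [Finset.sum_div, gGCWP, div_mul_eq_mul_div]
  have hfac :
      ∑ j, Real.exp (β * x t j ^ (r - 1)) * (β * (r - 1 : ℕ) * (x t j ^ (r - 2) * x' j))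
      = β * (r - 1 : ℕ) * ∑ j, Real.exp (β * x t j ^ (r - 1)) * (x t j ^ (r - 2) * x' j) := by
    rw [Finset.mul_sum]
    exact Finset.sum_congr rfl fun j _ => by ring
  rw [hmean, hfac, gGCWP]
  field_simp

lemma one_div_natCast_pos [NeZero q] : (0 : ℝ) < 1 / q :=
  one_div_pos.2 (Nat.cast_pos.2 (NeZero.pos q))

lemma one_div_le_sum_gGCWP_mul [NeZero q] (hβ : 0 ≤ β) {x : Fin q → ℝ}
    (hx : x ∈ simplexP q) :
    1 / q ≤ ∑ j, gGCWP q r β x j * x j := by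
  have hmono : Monovary (gGCWP q r β x) x := fun i j hij =>
    div_le_div_of_nonneg_right (Real.exp_le_exp.2 (mul_le_mul_of_nonneg_left
      (pow_le_pow_left₀ (hx.1 i) hij.le _) hβ))
      (Finset.sum_nonneg fun _ _ => (Real.exp_pos _).le)
  have hcheb := hmono.sum_mul_sum_le_card_mul_sum
  rw [sum_gGCWP, hx.2, Fintype.card_fin, one_mul] at hcheb
  rw [div_le_iff₀ (Nat.cast_pos.2 (NeZero.pos q))]
  linarith

lemma sum_gGCWP_mul_pow_mul_sub_nonneg [NeZero q] (hβ : 0 ≤ β) {x : Fin q → ℝ}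
    (hx : x ∈ simplexP q) (n : ℕ) :
    0 ≤ ∑ j, gGCWP q r β x j * (x j ^ n * (x j - 1 / q)) := by
  set c : ℝ := 1 / q
  have hc : 0 ≤ c := by positivity
  have hpow (y : ℝ) (hy : 0 ≤ y) : 0 ≤ (y ^ n - c ^ n) * (y - c) := by
    rcases le_total y c with h | h
    · exact mul_nonneg_of_nonpos_of_nonpos (sub_nonpos.2 (pow_le_pow_left₀ hy h n))
        (sub_nonpos.2 h)
    · exact mul_nonneg (sub_nonneg.2 (pow_le_pow_left₀ hc h n)) (sub_nonneg.2 h)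
  have hsplit : ∑ j, gGCWP q r β x j * (x j ^ n * (x j - c))
      = ∑ j, gGCWP q r β x j * ((x j ^ n - c ^ n) * (x j - c))
        + c ^ n * (∑ j, gGCWP q r β x j * x j - c) := by
    have hcenter : ∑ j, gGCWP q r β x j * x j - c = ∑ j, gGCWP q r β x j * (x j - c) := by
      simp only [mul_sub, Finset.sum_sub_distrib, ← Finset.sum_mul, sum_gGCWP, one_mul]
    rw [hcenter, Finset.mul_sum, ← Finset.sum_add_distrib]
    exact Finset.sum_congr rfl fun j _ => by ring
  rw [hsplit]
  exact add_nonneg (Finset.sum_nonneg fun j _ => mul_nonneg (gGCWP_pos x j).le (hpow _ (hx.1 j)))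
    (mul_nonneg (by positivity) (sub_nonneg.2 (one_div_le_sum_gGCWP_mul hβ hx)))

def linePath (q : ℕ) (z : Fin q → ℝ) (t : ℝ) : Fin q → ℝ := (1 - t) • zUnif q + t • z

/-- The `w_j` of the proof sketch: `β (r - 1) * rate r z t j` is the derivative of the exponent
`β x_j ^ (r - 1)` of `gGCWP` along `linePath q z`. -/
def rate (r : ℕ) (z : Fin q → ℝ) (t : ℝ) (j : Fin q) : ℝ :=
  linePath q z t j ^ (r - 2) * (z j - 1 / q)

def rateDeriv (r : ℕ) (z : Fin q → ℝ) (t : ℝ) (j : Fin q) : ℝ :=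
  (r - 2 : ℕ) * linePath q z t j ^ (r - 3) * (z j - 1 / q) ^ 2

def meanRate (r : ℕ) (β : ℝ) (z : Fin q → ℝ) (t : ℝ) : ℝ :=
  ∑ j, gGCWP q r β (linePath q z t) j * rate r z t j

variable {z : Fin q → ℝ} {t : ℝ}

lemma linePath_apply (j : Fin q) : linePath q z t j = 1 / q + t * (z j - 1 / q) := by
  simp only [linePath, zUnif, Pi.add_apply, Pi.smul_apply, smul_eq_mul]
  ring

lemma linePath_apply_sub_one_div (j : Fin q) : linePath q z t j - 1 / q = t * (z j - 1 / q) := by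
  rw [linePath_apply]
  ring

lemma linePath_zero : linePath q z 0 = zUnif q := by simp [linePath]

lemma linePath_one : linePath q z 1 = z := by simp [linePath]

lemma one_div_lt_linePath_apply {k : Fin q} (hk : 1 / q < z k) (ht : 0 < t) :
    1 / q < linePath q z t k :=
  sub_pos.1 (linePath_apply_sub_one_div k ▸ mul_pos ht (sub_pos.2 hk))

lemma sum_sub_one_div_eq_zero [NeZero q] (hz : z ∈ simplexP q) : ∑ j, (z j - 1 / q) = 0 := by
  simp [Finset.sum_sub_distrib, hz.2]

lemma exists_one_div_lt_of_ne_zUnif [NeZero q] (hz : z ∈ simplexP q) (hzu : z ≠ zUnif q) :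
    ∃ k, 1 / q < z k := by
  by_contra! h
  refine hzu (funext fun k => ?_)
  have := (Finset.sum_eq_zero_iff_of_nonpos fun j _ => sub_nonpos.2 (h j)).1
    (sum_sub_one_div_eq_zero hz) k (Finset.mem_univ k)
  rw [zUnif, ← sub_eq_zero, this]

lemma linePath_mem_simplexP [NeZero q] (hz : z ∈ simplexP q) (ht : t ∈ Icc 0 1) :
    linePath q z t ∈ simplexP q :=
  convex_stdSimplex ℝ (Fin q) (x := zUnif q) ⟨fun _ => by simp [zUnif], by simp [zUnif]⟩ hz
    (sub_nonneg.2 ht.2) ht.1 (by ring)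

lemma mul_rate (j : Fin q) :
    t * rate r z t j = linePath q z t j ^ (r - 2) * (linePath q z t j - 1 / q) := by
  rw [rate, linePath_apply_sub_one_div]
  ring

lemma mul_meanRate : t * meanRate r β z t = ∑ j, gGCWP q r β (linePath q z t) j *
    (linePath q z t j ^ (r - 2) * (linePath q z t j - 1 / q)) := by
  rw [meanRate, Finset.mul_sum]
  exact Finset.sum_congr rfl fun j _ => by rw [← mul_rate]; ring

lemma rate_nonpos [NeZero q] {j : Fin q} (hz : z ∈ simplexP q) (hj : z j ≤ 1 / q)
    (ht : t ∈ Icc 0 1) : rate r z t j ≤ 0 :=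
  mul_nonpos_of_nonneg_of_nonpos (pow_nonneg ((linePath_mem_simplexP hz ht).1 j) _)
    (sub_nonpos.2 hj)

lemma hasDerivAt_linePath_apply (j : Fin q) :
    HasDerivAt (fun s => linePath q z s j) (z j - 1 / q) t := by
  simp_rw [linePath_apply]
  simpa using ((hasDerivAt_id t).mul_const (z j - 1 / q)).const_add (1 / (q : ℝ))

lemma hasDerivAt_gGCWP_linePath (k : Fin q) :
    HasDerivAt (fun s => gGCWP q r β (linePath q z s) k)
      (β * (r - 1 : ℕ) * gGCWP q r β (linePath q z t) k *
        (rate r z t k - meanRate r β z t)) t :=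
  hasDerivAt_gGCWP (fun j => hasDerivAt_linePath_apply j) k

lemma hasDerivAt_rate (j : Fin q) : HasDerivAt (fun s => rate r z s j) (rateDeriv r z t j) t := by
  refine (((hasDerivAt_linePath_apply j).fun_pow (r - 2)).mul_const (z j - 1 / q)).congr_deriv ?_
  rw [rateDeriv, Nat.sub_sub]
  ring

lemma hasDerivAt_meanRate [NeZero q] :
    HasDerivAt (meanRate r β z)
      (β * (r - 1 : ℕ) *
          ∑ j, gGCWP q r β (linePath q z t) j * (rate r z t j - meanRate r β z t) ^ 2
        + ∑ j, gGCWP q r β (linePath q z t) j * rateDeriv r z t j) t := by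
  refine (HasDerivAt.fun_sum fun j _ =>
    (hasDerivAt_gGCWP_linePath (β := β) j).mul (hasDerivAt_rate j)).congr_deriv ?_
  set g := gGCWP q r β (linePath q z t)
  set w := rate r z t
  set m := meanRate r β z t
  set κ : ℝ := β * (r - 1 : ℕ)
  have hcenter : ∑ j, g j * (w j - m) = 0 := by
    simp only [mul_sub, Finset.sum_sub_distrib, ← Finset.sum_mul, g, sum_gGCWP, one_mul]
    exact sub_eq_zero.2 rfl
  calc ∑ j, (κ * g j * (w j - m) * w j + g j * rateDeriv r z t j)
      = κ * ∑ j, g j * (w j - m) ^ 2 + ∑ j, g j * rateDeriv r z t j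
        + κ * m * ∑ j, g j * (w j - m) := by
        simp only [Finset.mul_sum, ← Finset.sum_add_distrib]
        exact Finset.sum_congr rfl fun j _ => by ring
    _ = _ := by rw [hcenter, mul_zero, add_zero]

lemma meanRate_zero [NeZero q] (hz : z ∈ simplexP q) : meanRate r β z 0 = 0 := by
  simp only [meanRate, rate, linePath_zero, gGCWP_zUnif, zUnif, ← Finset.mul_sum,
    sum_sub_one_div_eq_zero hz, mul_zero]

lemma meanRate_nonneg [NeZero q] (hβ : 0 ≤ β) (hz : z ∈ simplexP q) (ht : t ∈ Ioc 0 1) :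
    0 ≤ meanRate r β z t := by
  have h := sum_gGCWP_mul_pow_mul_sub_nonneg (r := r) hβ
    (linePath_mem_simplexP hz (Ioc_subset_Icc_self ht)) (r - 2)
  rw [← mul_meanRate] at h
  exact nonneg_of_mul_nonneg_right h ht.1

lemma rateDeriv_le_sum_of_meanRate_eq [NeZero q] {k : Fin q} (hz : z ∈ simplexP q)
    (hk : 1 / q < z k) (ht : t ∈ Ioc 0 1) (hcross : meanRate r β z t = rate r z t k) :
    rateDeriv r z t k ≤ ∑ j, gGCWP q r β (linePath q z t) j * rateDeriv r z t j := by
  rcases Nat.lt_or_ge r 3 with hr | hr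
  · simp [rateDeriv, show r - 2 = 0 by omega]
  have hr2 : r - 2 = r - 3 + 1 := by omega
  -- Multiplying the crossing identity by `t` puts it in the form of the tangent inequality.
  have hφ : ∑ j, gGCWP q r β (linePath q z t) j *
      (linePath q z t j ^ (r - 3 + 1) * (linePath q z t j - 1 / q))
        = linePath q z t k ^ (r - 3 + 1) * (linePath q z t k - 1 / q) := by
    rw [← hr2, ← mul_meanRate, hcross, mul_rate]
  have hx := linePath_mem_simplexP hz (Ioc_subset_Icc_self ht)
  have hjensen := pow_mul_sub_sq_le_sum_of_sum_eq (fun j _ => (gGCWP_pos _ j).le) (sum_gGCWP _)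
    (fun j _ => hx.1 j) one_div_natCast_pos
    (one_div_lt_linePath_apply hk ht.1) hφ
  refine le_of_mul_le_mul_left ?_ (pow_pos ht.1 2)
  calc t ^ 2 * rateDeriv r z t k
      = ((r - 2 : ℕ) : ℝ) * (linePath q z t k ^ (r - 3) * (linePath q z t k - 1 / q) ^ 2) := by
        rw [rateDeriv, linePath_apply_sub_one_div]; ring
    _ ≤ ((r - 2 : ℕ) : ℝ) * ∑ j, gGCWP q r β (linePath q z t) j *
          (linePath q z t j ^ (r - 3) * (linePath q z t j - 1 / q) ^ 2) :=
        mul_le_mul_of_nonneg_left hjensen (Nat.cast_nonneg _)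
    _ = t ^ 2 * ∑ j, gGCWP q r β (linePath q z t) j * rateDeriv r z t j := by
        rw [Finset.mul_sum, Finset.mul_sum]
        exact Finset.sum_congr rfl fun j _ => by rw [rateDeriv, linePath_apply_sub_one_div]; ring

lemma deriv_meanRate_sub_rate_pos [NeZero q] (hβ : 0 < β) (hr : 2 ≤ r) (hz : z ∈ simplexP q)
    {k j₀ : Fin q} (hk : 1 / q < z k) (hj₀ : z j₀ < 1 / q) (ht : t ∈ Ioc 0 1)
    (hcross : meanRate r β z t = rate r z t k) :
    0 < β * (r - 1 : ℕ) *
          ∑ j, gGCWP q r β (linePath q z t) j * (rate r z t j - meanRate r β z t) ^ 2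
      + ∑ j, gGCWP q r β (linePath q z t) j * rateDeriv r z t j - rateDeriv r z t k := by
  have hwk : 0 < rate r z t k :=
    mul_pos (pow_pos (one_div_natCast_pos.trans (one_div_lt_linePath_apply hk ht.1)) _)
      (sub_pos.2 hk)
  have hvar :
      0 < ∑ j, gGCWP q r β (linePath q z t) j * (rate r z t j - meanRate r β z t) ^ 2 := by
    have hj₀w : rate r z t j₀ - meanRate r β z t < 0 := by
      linarith [rate_nonpos (r := r) hz hj₀.le (Ioc_subset_Icc_self ht)]
    exact (mul_pos (gGCWP_pos _ j₀) (sq_pos_of_neg hj₀w)).trans_le (Finset.single_le_sum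
      (f := fun j => gGCWP q r β (linePath q z t) j * (rate r z t j - meanRate r β z t) ^ 2)
      (fun j _ => mul_nonneg (gGCWP_pos _ j).le (sq_nonneg _)) (Finset.mem_univ j₀))
  have hκ : 0 < β * (r - 1 : ℕ) := mul_pos hβ (Nat.cast_pos.2 (by omega))
  linarith [mul_pos hκ hvar, rateDeriv_le_sum_of_meanRate_eq hz hk ht hcross]

lemma exists_sign_change_meanRate_sub_rate [NeZero q] (hβ : 0 < β) (hr : 2 ≤ r)
    (hz : z ∈ simplexP q) {k : Fin q} (hk : 1 / q < z k) :
    ∃ τ ∈ Icc (0 : ℝ) 1, (∀ t ∈ Ioo 0 τ, meanRate r β z t ≤ rate r z t k) ∧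
      ∀ t ∈ Ioo τ 1, rate r z t k ≤ meanRate r β z t := by
  obtain ⟨j₀, hj₀⟩ : ∃ j, z j < 1 / q := by
    by_contra! h
    have := Finset.sum_pos' (fun j _ => sub_nonneg.2 (h j)) ⟨k, Finset.mem_univ k, sub_pos.2 hk⟩
    exact this.ne' (sum_sub_one_div_eq_zero hz)
  have h0 : meanRate r β z 0 - rate r z 0 k < 0 := by
    rw [meanRate_zero hz, rate, linePath_zero, zero_sub, neg_neg_iff_pos]
    exact mul_pos (pow_pos one_div_natCast_pos _) (sub_pos.2 hk)
  obtain ⟨τ, hτ, hneg, hpos⟩ := exists_sign_change_of_deriv_pos_at_zero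
    (fun t => hasDerivAt_meanRate.sub (hasDerivAt_rate k)) h0
    fun t ht h =>
      deriv_meanRate_sub_rate_pos hβ hr hz hk hj₀ (Ioo_subset_Ioc_self ht) (sub_eq_zero.1 h)
  exact ⟨τ, hτ, fun t ht => sub_nonpos.1 (hneg t ht), fun t ht => sub_nonneg.1 (hpos t ht)⟩

lemma integral_abs_deriv_gGCWP_linePath [NeZero q] (hβ : 0 ≤ β) (k : Fin q) {τ : ℝ}
    (hτ : τ ∈ Icc (0 : ℝ) 1) (hup : ∀ t ∈ Ioo 0 τ, meanRate r β z t ≤ rate r z t k)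
    (hdown : ∀ t ∈ Ioo τ 1, rate r z t k ≤ meanRate r β z t) :
    ∫ t in (0 : ℝ)..1, |deriv (fun s => gGCWP q r β (linePath q z s) k) t|
      = 2 * gGCWP q r β (linePath q z τ) k - 1 / q - gGCWP q r β z k := by
  have hcont_g : Continuous fun t => gGCWP q r β (linePath q z t) k :=
    continuous_iff_continuousAt.2 fun t => (hasDerivAt_gGCWP_linePath (t := t) k).continuousAt
  have hcont_rate : Continuous fun t => rate r z t k :=
    continuous_iff_continuousAt.2 fun t => (hasDerivAt_rate (t := t) k).continuousAt
  have hcont_mean : Continuous (meanRate r β z) :=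
    continuous_iff_continuousAt.2 fun t => (hasDerivAt_meanRate (t := t)).continuousAt
  have hκ : 0 ≤ β * (r - 1 : ℕ) := mul_nonneg hβ (Nat.cast_nonneg _)
  have hderiv : deriv (fun s => gGCWP q r β (linePath q z s) k) = fun t =>
      β * (r - 1 : ℕ) * gGCWP q r β (linePath q z t) k * (rate r z t k - meanRate r β z t) :=
    funext fun t => (hasDerivAt_gGCWP_linePath k).deriv
  rw [hderiv, integral_abs_eq_of_unimodal (fun t => hasDerivAt_gGCWP_linePath k)
    ((continuous_const.mul hcont_g).mul (hcont_rate.sub hcont_mean)) hτ.1 hτ.2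
    (fun t ht => mul_nonneg (mul_nonneg hκ (gGCWP_pos _ k).le) (sub_nonneg.2 (hup t ht)))
    (fun t ht => mul_nonpos_of_nonneg_of_nonpos (mul_nonneg hκ (gGCWP_pos _ k).le)
      (sub_nonpos.2 (hdown t ht))),
    linePath_zero, linePath_one, gGCWP_zUnif]

lemma gGCWP_linePath_lt [NeZero q] (hz : z ∈ simplexP q)
    (hcontr : ∀ x ∈ simplexP q, ∀ k : Fin q,
      x k ∈ Ioc (1 / (q : ℝ)) 1 → gGCWP q r β x k < x k)
    {k : Fin q} (hk : 1 / q < z k) (ht : t ∈ Icc 0 1) :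
    gGCWP q r β (linePath q z t) k < z k := by
  rcases ht.1.eq_or_lt with rfl | ht0
  · rwa [linePath_zero, gGCWP_zUnif]
  have hx := linePath_mem_simplexP hz ht
  have hle : linePath q z t k ≤ 1 :=
    hx.2 ▸ Finset.single_le_sum (fun j _ => hx.1 j) (Finset.mem_univ k)
  calc gGCWP q r β (linePath q z t) k < linePath q z t k :=
        hcontr _ hx k ⟨one_div_lt_linePath_apply hk ht0, hle⟩
    _ ≤ z k := by
        rw [linePath_apply]
        nlinarith [ht.2, sub_pos.2 hk]

lemma integral_abs_deriv_gGCWP_linePath_of_le [NeZero q] (hβ : 0 ≤ β) (hz : z ∈ simplexP q)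
    {k : Fin q} (hk : z k ≤ 1 / q) :
    ∫ t in (0 : ℝ)..1, |deriv (fun s => gGCWP q r β (linePath q z s) k) t|
      = 1 / q - gGCWP q r β z k := by
  rw [integral_abs_deriv_gGCWP_linePath hβ k (left_mem_Icc.2 zero_le_one) (by simp)
    fun t ht => (rate_nonpos hz hk (Ioo_subset_Icc_self ht)).trans
      (meanRate_nonneg hβ hz (Ioo_subset_Ioc_self ht)), linePath_zero, gGCWP_zUnif]
  ring

lemma integral_abs_deriv_gGCWP_linePath_add_lt [NeZero q] (hβ : 0 < β) (hr : 2 ≤ r)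
    (hz : z ∈ simplexP q)
    (hcontr : ∀ x ∈ simplexP q, ∀ k : Fin q,
      x k ∈ Ioc (1 / (q : ℝ)) 1 → gGCWP q r β x k < x k)
    {k : Fin q} (hk : 1 / q < z k) :
    (∫ t in (0 : ℝ)..1, |deriv (fun s => gGCWP q r β (linePath q z s) k) t|)
      + (gGCWP q r β z k - 1 / q) < |z k - 1 / q| + (z k - 1 / q) := by
  obtain ⟨τ, hτ, hup, hdown⟩ := exists_sign_change_meanRate_sub_rate hβ hr hz hk
  rw [integral_abs_deriv_gGCWP_linePath hβ.le k hτ hup hdown, abs_of_pos (sub_pos.2 hk)]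
  linarith [gGCWP_linePath_lt hz hcontr hk hτ]

lemma integral_abs_deriv_gGCWP_linePath_add_le [NeZero q] (hβ : 0 < β) (hr : 2 ≤ r)
    (hz : z ∈ simplexP q)
    (hcontr : ∀ x ∈ simplexP q, ∀ k : Fin q,
      x k ∈ Ioc (1 / (q : ℝ)) 1 → gGCWP q r β x k < x k)
    (k : Fin q) :
    (∫ t in (0 : ℝ)..1, |deriv (fun s => gGCWP q r β (linePath q z s) k) t|)
      + (gGCWP q r β z k - 1 / q) ≤ |z k - 1 / q| + (z k - 1 / q) := by
  rcases le_or_gt (z k) (1 / q) with hk | hk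
  · rw [integral_abs_deriv_gGCWP_linePath_of_le hβ.le hz hk, abs_of_nonpos (sub_nonpos.2 hk)]
    linarith
  · exact (integral_abs_deriv_gGCWP_linePath_add_lt hβ hr hz hcontr hk).le

end GCWP

open GCWP

/-- **Aggregate `g`-variation along straight lines** (proof of Lemma 7.3 in the
survey).  If `g_k^r(z) < z_k` whenever `z_k ∈ (1/q,1]` (which holds for
`β < β_s(q,r)`), then for every `z ∈ P`, `z ≠ z_β`, the straight-line path
`z(t) = (1−t)z_β + tz` satisfies
`Σ_k ∫₀¹ |d/dt g_k^r(z(t))| dt < ‖z − z_β‖₁`. -/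
theorem gcwp_aggregate_variation (q r : ℕ) (hq : 2 ≤ q) (hr : 2 ≤ r)
    (β : ℝ) (hβ : 0 < β)
    (hcontr : ∀ z ∈ simplexP q, ∀ k : Fin q,
      z k ∈ Set.Ioc (1 / (q : ℝ)) 1 → gGCWP q r β z k < z k) :
    ∀ z ∈ simplexP q, z ≠ zUnif q →
      (∑ k : Fin q, ∫ t in (0 : ℝ)..1,
          |deriv (fun s : ℝ => gGCWP q r β ((1 - s) • zUnif q + s • z) k) t|)
        < l1 q (z - zUnif q) := by
  intro z hz hzu
  have : NeZero q := ⟨by omega⟩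
  obtain ⟨k₀, hk₀⟩ := exists_one_div_lt_of_ne_zUnif hz hzu
  have hg : ∑ k, (gGCWP q r β z k - 1 / q) = 0 := by
    simp [Finset.sum_sub_distrib, sum_gGCWP]
  change ∑ k, ∫ t in (0 : ℝ)..1, |deriv (fun s => gGCWP q r β (linePath q z s) k) t| < _
  calc ∑ k, ∫ t in (0 : ℝ)..1, |deriv (fun s => gGCWP q r β (linePath q z s) k) t|
      = ∑ k, ((∫ t in (0 : ℝ)..1, |deriv (fun s => gGCWP q r β (linePath q z s) k) t|)
          + (gGCWP q r β z k - 1 / q)) := by rw [Finset.sum_add_distrib, hg, add_zero]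
    _ < ∑ k, (|z k - 1 / q| + (z k - 1 / q)) :=
        Finset.sum_lt_sum (fun k _ => integral_abs_deriv_gGCWP_linePath_add_le hβ hr hz hcontr k)
          ⟨k₀, Finset.mem_univ k₀,
            integral_abs_deriv_gGCWP_linePath_add_lt hβ hr hz hcontr hk₀⟩
    _ = l1 q (z - zUnif q) := by
        rw [Finset.sum_add_distrib, sum_sub_one_div_eq_zero hz, add_zero]
        rfl

end
end

section
/- Fix integers q ≥ 2, r ≥ 2 and β > 0. For z ∈ P with z ≠ z_β let z(t) = (1−t)z_β + t z for t ∈ [0,1], and define the weighted inner product h(t) = ⟨z − z_β, g^r(z(t))⟩_ρ := Σ_{j=1}^q g_j^r(z(t)) (z_j − 1/q) ((1−t)/q + t z_j)^{r−2}. Then h(0) = 0 and h is strictly increasing on [0,1) (its derivative is bounded below by β(r−1) times a variance with respect to the weights g^r(z(t)), which is strictly positive). -/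
noncomputable section

/-- The weighted inner product
`h(t) = ⟨z − z_β, g^r(z(t))⟩_ρ = Σ_j g_j^r(z(t)) (z_j − 1/q) ((1−t)/q + t z_j)^{r−2}`
along the straight line `z(t) = (1−t)z_β + tz`. -/
def wInner (q r : ℕ) (β : ℝ) (z : Fin q → ℝ) (t : ℝ) : ℝ :=
  ∑ j : Fin q, gGCWP q r β ((1 - t) • zUnif q + t • z) j *
    (z j - 1 / (q : ℝ)) * ((1 - t) / (q : ℝ) + t * z j) ^ (r - 2)

/-!
Along the segment, `h(t)` is the mean of `X_j(t) = (z_j - 1/q) w_j(t)^{r-2}` under the Gibbs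
weights `exp (β w_j(t)^{r-1})`, where `w_j(t) = (1-t)/q + t z_j`. The exponents have derivative
`β (r-1) X_j`, so `h'` is the mean of the nonnegative `X_j'` plus `β (r-1)` times the Gibbs variance
of `X`. That variance is positive because the deviations `z_j - 1/q` sum to zero without all
vanishing, so they take both signs.
-/

open Real Finset

section Gibbs

variable {ι : Type*} [Fintype ι]

def gibbsMean (a X : ι → ℝ) : ℝ := (∑ j, exp (a j) * X j) / ∑ j, exp (a j)

lemma sum_exp_pos [Nonempty ι] (a : ι → ℝ) : 0 < ∑ j, exp (a j) :=
  sum_pos (fun j _ => exp_pos (a j)) univ_nonempty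

lemma gibbsMean_const_mul (a X : ι → ℝ) (c : ℝ) :
    gibbsMean a (fun j => c * X j) = c * gibbsMean a X := by
  simp only [gibbsMean, mul_left_comm _ c, ← mul_sum, mul_div_assoc]

lemma gibbsMean_nonneg (a : ι → ℝ) {X : ι → ℝ} (hX : ∀ j, 0 ≤ X j) : 0 ≤ gibbsMean a X :=
  div_nonneg (sum_nonneg fun j _ => mul_nonneg (exp_pos _).le (hX j))
    (sum_nonneg fun _ _ => (exp_pos _).le)

lemma gibbsMean_sq_sub_sq [Nonempty ι] (a X : ι → ℝ) :
    gibbsMean a (fun j => X j ^ 2) - gibbsMean a X ^ 2 =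
      gibbsMean a (fun j => (X j - gibbsMean a X) ^ 2) := by
  have hZ := (sum_exp_pos a).ne'
  set m := gibbsMean a X with hm
  have hexpand : ∑ j, exp (a j) * (X j - m) ^ 2 =
      ∑ j, exp (a j) * X j ^ 2 - 2 * m * ∑ j, exp (a j) * X j + m ^ 2 * ∑ j, exp (a j) := by
    rw [mul_sum, mul_sum, ← sum_sub_distrib, ← sum_add_distrib]
    exact sum_congr rfl fun j _ => by ring
  simp only [gibbsMean] at hm ⊢
  rw [hexpand, hm]
  field_simp
  ring

lemma sq_gibbsMean_lt_gibbsMean_sq [Nonempty ι] (a : ι → ℝ) {X : ι → ℝ}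
    (hX : ∃ i k, X i ≠ X k) : gibbsMean a X ^ 2 < gibbsMean a (fun j => X j ^ 2) := by
  obtain ⟨i, k, hik⟩ := hX
  obtain ⟨j, hj⟩ : ∃ j, X j ≠ gibbsMean a X := by
    by_contra! h
    exact hik ((h i).trans (h k).symm)
  rw [← sub_pos, gibbsMean_sq_sub_sq]
  refine div_pos (sum_pos' (fun j _ => by positivity) ⟨j, mem_univ j, ?_⟩) (sum_exp_pos a)
  exact mul_pos (exp_pos _) (sq_pos_of_ne_zero (sub_ne_zero.mpr hj))

/-- The second summand is the Gibbs covariance of `a'` and `X`. -/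
lemma hasDerivAt_gibbsMean [Nonempty ι] {a X : ι → ℝ → ℝ} {a' X' : ι → ℝ} {t : ℝ}
    (ha : ∀ j, HasDerivAt (a j) (a' j) t) (hX : ∀ j, HasDerivAt (X j) (X' j) t) :
    HasDerivAt (fun s => gibbsMean (a · s) (X · s))
      (gibbsMean (a · t) X' + (gibbsMean (a · t) (fun j => a' j * X j t) -
        gibbsMean (a · t) a' * gibbsMean (a · t) (X · t))) t := by
  have hN : HasDerivAt (fun s => ∑ j, exp (a j s) * X j s)
      (∑ j, (exp (a j t) * a' j * X j t + exp (a j t) * X' j)) t :=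
    HasDerivAt.fun_sum fun j _ => (ha j).exp.mul (hX j)
  have hZ : HasDerivAt (fun s => ∑ j, exp (a j s)) (∑ j, exp (a j t) * a' j) t :=
    HasDerivAt.fun_sum fun j _ => (ha j).exp
  refine (hN.fun_div hZ (sum_exp_pos _).ne').congr_deriv ?_
  simp only [gibbsMean, sum_add_distrib]
  field_simp
  ring

lemma strictMonoOn_gibbsMean [Nonempty ι] {a X X' : ι → ℝ → ℝ} {c : ℝ} {D : Set ℝ}
    (hD : Convex ℝ D) (hc : 0 < c) (ha : ∀ j t, HasDerivAt (a j) (c * X j t) t)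
    (hX : ∀ j t, HasDerivAt (X j) (X' j t) t) (hX' : ∀ t ∈ interior D, ∀ j, 0 ≤ X' j t)
    (hXne : ∀ t ∈ interior D, ∃ i k, X i t ≠ X k t) :
    StrictMonoOn (fun t => gibbsMean (a · t) (X · t)) D := by
  have hderiv t := hasDerivAt_gibbsMean (ha · t) (hX · t)
  refine strictMonoOn_of_hasDerivWithinAt_pos hD
    (fun t _ => (hderiv t).continuousAt.continuousWithinAt)
    (fun t _ => (hderiv t).hasDerivWithinAt) fun t ht => ?_
  have hcov : gibbsMean (a · t) (fun j => c * X j t * X j t) -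
      gibbsMean (a · t) (fun j => c * X j t) * gibbsMean (a · t) (X · t) =
      c * (gibbsMean (a · t) (fun j => X j t ^ 2) - gibbsMean (a · t) (X · t) ^ 2) := by
    simp only [mul_assoc, ← sq, gibbsMean_const_mul]
    ring
  rw [hcov]
  exact add_pos_of_nonneg_of_pos (gibbsMean_nonneg _ (hX' t ht))
    (mul_pos hc (sub_pos.mpr (sq_gibbsMean_lt_gibbsMean_sq _ (hXne t ht))))

end Gibbs

lemma hasDerivAt_div_add_mul (c x t : ℝ) :
    HasDerivAt (fun s => (1 - s) / c + s * x) (x - 1 / c) t := by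
  refine (((hasDerivAt_id t).const_sub 1).div_const c |>.fun_add
    ((hasDerivAt_id t).mul_const x)).congr_deriv ?_
  ring

lemma wInner_eq_gibbsMean (q r : ℕ) (β : ℝ) (z : Fin q → ℝ) (t : ℝ) :
    wInner q r β z t =
      gibbsMean (fun j => β * ((1 - t) / q + t * z j) ^ (r - 1))
        (fun j => (z j - 1 / q) * ((1 - t) / q + t * z j) ^ (r - 2)) := by
  have hpt (j : Fin q) : ((1 - t) • zUnif q + t • z) j = (1 - t) / q + t * z j := by
    simp only [Pi.add_apply, Pi.smul_apply, zUnif, smul_eq_mul]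
    ring
  simp only [wInner, gibbsMean, gGCWP, hpt, sum_div]
  exact sum_congr rfl fun j _ => by ring

lemma sum_sub_inv_eq_zero {q : ℕ} (hq : q ≠ 0) {z : Fin q → ℝ} (hz : z ∈ simplexP q) :
    ∑ j, (z j - 1 / q) = 0 := by
  simp only [sum_sub_distrib, hz.2, sum_const, card_univ, Fintype.card_fin, nsmul_eq_mul]
  field_simp
  ring

lemma wInner_zero (q r : ℕ) (hq : q ≠ 0) (β : ℝ) {z : Fin q → ℝ} (hz : z ∈ simplexP q) :
    wInner q r β z 0 = 0 := by
  simp only [wInner_eq_gibbsMean, gibbsMean, sub_zero, zero_mul, add_zero, mul_comm (_ - _),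
    ← mul_assoc, sum_sub_inv_eq_zero hq hz, ← mul_sum, mul_zero, zero_div]

lemma exists_lt_and_lt_of_ne_zUnif {q : ℕ} {z : Fin q → ℝ} (hz : z ∈ simplexP q)
    (hne : z ≠ zUnif q) : ∃ i k, 1 / q < z i ∧ z k < 1 / q := by
  obtain ⟨j, hj⟩ : ∃ j, z j - 1 / q ≠ 0 := by
    by_contra! h
    exact hne (funext fun j => sub_eq_zero.mp (h j))
  have hd := sum_sub_inv_eq_zero j.pos.ne' hz
  obtain ⟨i, -, hi⟩ := exists_pos_of_sum_zero_of_exists_nonzero _ hd ⟨j, mem_univ _, hj⟩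
  obtain ⟨k, -, hk⟩ := exists_pos_of_sum_zero_of_exists_nonzero (fun j => -(z j - 1 / q))
    (by rw [sum_neg_distrib, hd, neg_zero]) ⟨j, mem_univ _, neg_ne_zero.mpr hj⟩
  exact ⟨i, k, sub_pos.mp hi, by linarith⟩

lemma div_add_mul_pos {q : ℕ} (hq : q ≠ 0) {z : Fin q → ℝ} (hz : z ∈ simplexP q) {t : ℝ}
    (ht : t ∈ Set.Ico (0 : ℝ) 1) (j : Fin q) : 0 < (1 - t) / q + t * z j := by
  have : 0 < (1 - t) / q := div_pos (by linarith [ht.2]) (by positivity)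
  linarith [mul_nonneg ht.1 (hz.1 j)]

theorem gcwp_weighted_inner_increasing_general (q r : ℕ) (hr : 2 ≤ r)
    (β : ℝ) (hβ : 0 < β) (z : Fin q → ℝ) (hz : z ∈ simplexP q) (hne : z ≠ zUnif q) :
    wInner q r β z 0 = 0 ∧ StrictMonoOn (wInner q r β z) (Set.Ico (0 : ℝ) 1) := by
  obtain ⟨i, k, hi, hk⟩ := exists_lt_and_lt_of_ne_zUnif hz hne
  have hq : q ≠ 0 := i.pos.ne'
  have : Nonempty (Fin q) := ⟨i⟩
  have hw t (ht : t ∈ interior (Set.Ico (0 : ℝ) 1)) := div_add_mul_pos hq hz (interior_subset ht)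
  refine ⟨wInner_zero q r hq β hz, ?_⟩
  rw [funext (wInner_eq_gibbsMean q r β z)]
  refine strictMonoOn_gibbsMean (convex_Ico 0 1) (c := β * (r - 1 : ℕ))
    (mul_pos hβ (by norm_cast; omega)) (fun j t => ?_)
    (fun j t => (hasDerivAt_div_add_mul q (z j) t |>.pow (r - 2)).const_mul (z j - 1 / q))
    (fun t ht j => ?_) (fun t ht => ⟨i, k, ?_⟩)
  · refine ((hasDerivAt_div_add_mul q (z j) t).pow (r - 1)).const_mul β |>.congr_deriv ?_
    rw [show r - 1 - 1 = r - 2 by omega]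
    ring
  · rw [mul_left_comm, ← mul_assoc, mul_assoc _ (z j - _)]
    exact mul_nonneg (mul_nonneg (Nat.cast_nonneg _) (pow_nonneg (hw t ht j).le _))
      (mul_self_nonneg _)
  · have hXi := mul_pos (sub_pos.mpr hi) (pow_pos (hw t ht i) (r - 2))
    have hXk := mul_neg_of_neg_of_pos (sub_neg.mpr hk) (pow_pos (hw t ht k) (r - 2))
    exact (hXk.trans hXi).ne'

/-- **Monotonicity of the weighted inner product** (proof of Lemma 7.3 in the
survey).  For `z ∈ P`, `z ≠ z_β`, the function
`h(t) = ⟨z − z_β, g^r(z(t))⟩_ρ` satisfies `h(0) = 0` and is strictly increasing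
on `[0,1)`. -/
theorem gcwp_weighted_inner_increasing (q r : ℕ) (hq : 2 ≤ q) (hr : 2 ≤ r)
    (β : ℝ) (hβ : 0 < β) (z : Fin q → ℝ) (hz : z ∈ simplexP q) (hne : z ≠ zUnif q) :
    wInner q r β z 0 = 0 ∧ StrictMonoOn (wInner q r β z) (Set.Ico (0 : ℝ) 1) :=
  gcwp_weighted_inner_increasing_general q r hr β hβ z hz hne

end
end

section
/- Fix integers q ≥ 2, r ≥ 2 and β > 0. For z ∈ P with z ≠ z_β let z(t) = (1−t)z_β + t z for t ∈ [0,1]. Then for each k ∈ {1,…,q}: (a) if z_k ≤ 1/q, the function t ↦ g_k^r(z(t)) is monotonically decreasing on [0,1]; (b) if z_k > 1/q, the function t ↦ g_k^r(z(t)) has at most one critical point in (0,1), i.e. there is at most one t* ∈ (0,1) at which d/dt [g_k^r(z(t))] vanishes. -/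
noncomputable section

namespace GCWP
open Filter Set

/-- point on the line from `zUnif` to `z` -/
def lw (q : ℕ) (z : Fin q → ℝ) (t : ℝ) (j : Fin q) : ℝ := 1/(q:ℝ) + t * (z j - 1/(q:ℝ))

def lE (q r : ℕ) (β : ℝ) (z : Fin q → ℝ) (t : ℝ) (j : Fin q) : ℝ :=
  Real.exp (β * (lw q z t j) ^ (r-1))

def lS (q r : ℕ) (β : ℝ) (z : Fin q → ℝ) (t : ℝ) : ℝ := ∑ j, lE q r β z t j

/-- Gibbs weights along the line -/
def lp (q r : ℕ) (β : ℝ) (z : Fin q → ℝ) (t : ℝ) (j : Fin q) : ℝ :=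
  lE q r β z t j / lS q r β z t

def lc (q r : ℕ) (z : Fin q → ℝ) (t : ℝ) (j : Fin q) : ℝ :=
  (lw q z t j)^(r-2) * (z j - 1/(q:ℝ))

def lM (q r : ℕ) (β : ℝ) (z : Fin q → ℝ) (t : ℝ) : ℝ :=
  ∑ j, lp q r β z t j * lc q r z t j

/-- `lG` has the sign of the derivative of `g_k` along the line. -/
def lG (q r : ℕ) (β : ℝ) (z : Fin q → ℝ) (k : Fin q) (t : ℝ) : ℝ :=
  lc q r z t k - lM q r β z t

/-- derivative of `lG` -/
def lGd (q r : ℕ) (β : ℝ) (z : Fin q → ℝ) (k : Fin q) (t : ℝ) : ℝ :=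
  ((r-2 : ℕ) : ℝ) * (lw q z t k)^(r-2-1) * (z k - 1/(q:ℝ))^2
    - ∑ j, (lp q r β z t j * (β * ((r-1 : ℕ) : ℝ)) * (lc q r z t j - lM q r β z t) * lc q r z t j
          + lp q r β z t j * (((r-2 : ℕ) : ℝ) * (lw q z t j)^(r-2-1) * (z j - 1/(q:ℝ))^2))

variable {q r : ℕ} {β : ℝ} {z : Fin q → ℝ} {k : Fin q} {t : ℝ}

lemma lw_hasDerivAt (j : Fin q) :
    HasDerivAt (fun t => lw q z t j) (z j - 1/(q:ℝ)) t := by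
  have h := ((hasDerivAt_id t).mul_const (z j - 1/(q:ℝ))).const_add (1/(q:ℝ))
  simpa [lw] using h

lemma lwpow_hasDerivAt (j : Fin q) (m : ℕ) :
    HasDerivAt (fun t => (lw q z t j) ^ m)
      ((m:ℝ) * (lw q z t j)^(m-1) * (z j - 1/(q:ℝ))) t :=
  (lw_hasDerivAt j).pow m

lemma lE_hasDerivAt (j : Fin q) :
    HasDerivAt (fun t => lE q r β z t j)
      (lE q r β z t j * (β * (((r-1 : ℕ):ℝ) * (lw q z t j)^(r-2) * (z j - 1/(q:ℝ))))) t := by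
  have h1 := ((lwpow_hasDerivAt (z := z) (t := t) j (r-1)).const_mul β :
    HasDerivAt (fun t => β * (lw q z t j)^(r-1))
      (β * (((r-1 : ℕ):ℝ) * (lw q z t j)^(r-1-1) * (z j - 1/(q:ℝ)))) t)
  have h2 := h1.exp
  have h3 : r - 1 - 1 = r - 2 := by omega
  rw [h3] at h2
  simpa [lE, mul_assoc, mul_comm, mul_left_comm] using h2

lemma lS_hasDerivAt :
    HasDerivAt (fun t => lS q r β z t)
      (∑ j, lE q r β z t j * (β * (((r-1 : ℕ):ℝ) * (lw q z t j)^(r-2) * (z j - 1/(q:ℝ))))) t :=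
  HasDerivAt.fun_sum (fun j _ => lE_hasDerivAt j)

lemma lE_pos (j : Fin q) : 0 < lE q r β z t j := Real.exp_pos _

lemma lS_pos (hq : 0 < q) : 0 < lS q r β z t := by
  have : Nonempty (Fin q) := ⟨⟨0, hq⟩⟩
  exact Finset.sum_pos (fun j _ => lE_pos j) Finset.univ_nonempty

lemma lp_pos (hq : 0 < q) (j : Fin q) : 0 < lp q r β z t j :=
  div_pos (lE_pos j) (lS_pos hq)

lemma lp_sum (hq : 0 < q) : ∑ j, lp q r β z t j = 1 := by
  simp only [lp]
  rw [← Finset.sum_div]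
  exact div_self (lS_pos (q := q) (r := r) (β := β) (z := z) (t := t) hq).ne'

lemma f_hasDerivAt (hq : 0 < q) :
    HasDerivAt (fun t => lE q r β z t k / lS q r β z t)
      (β * ((r-1 : ℕ) : ℝ) * (lE q r β z t k / lS q r β z t) * lG q r β z k t) t := by
  have hS : lS q r β z t ≠ 0 := (lS_pos hq).ne'
  have h := HasDerivAt.fun_div (lE_hasDerivAt (q := q) (r := r) (β := β) (z := z) (t := t) k)
    (lS_hasDerivAt (q := q) (r := r) (β := β) (z := z) (t := t)) hS
  refine h.congr_deriv ?_
  have hsum : ∑ j, lE q r β z t j * (β * (((r-1 : ℕ) : ℝ) * (lw q z t j)^(r-2) * (z j - 1/(q:ℝ))))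
      = β * ((r-1 : ℕ) : ℝ) * ∑ j, lE q r β z t j * lc q r z t j := by
    rw [Finset.mul_sum]
    exact Finset.sum_congr rfl fun j _ => by simp only [lc]; ring
  have hg : lG q r β z k t = lc q r z t k
      - (∑ j, lE q r β z t j * lc q r z t j) / lS q r β z t := by
    rw [lG, lM, Finset.sum_div]
    congr 1
    exact Finset.sum_congr rfl fun j _ => by simp only [lp]; ring
  have hek : lE q r β z t k * (β * (((r-1 : ℕ) : ℝ) * (lw q z t k)^(r-2) * (z k - 1/(q:ℝ))))
      = lE q r β z t k * (β * (((r-1 : ℕ) : ℝ) * lc q r z t k)) := by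
    simp only [lc]; ring
  rw [hsum, hg, hek]
  field_simp

lemma sum_b (hq : 0 < q) (hs : ∑ j, z j = 1) : ∑ j, (z j - 1/(q:ℝ)) = 0 := by
  have hq' : (q:ℝ) ≠ 0 := Nat.cast_ne_zero.mpr hq.ne'
  rw [Finset.sum_sub_distrib, hs, Finset.sum_const]
  simp only [Finset.card_univ, Fintype.card_fin, nsmul_eq_mul]
  field_simp
  norm_num

lemma lw_nonneg (ht : t ∈ Icc (0:ℝ) 1) (hz : ∀ j, 0 ≤ z j) (j : Fin q) :
    0 ≤ lw q z t j := by
  have h1 : (0:ℝ) ≤ 1/(q:ℝ) := by positivity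
  have := hz j
  obtain ⟨ht0, ht1⟩ := ht
  rw [lw]
  nlinarith

lemma sum_Eb_nonneg (hq : 0 < q) (hβ : 0 ≤ β) (ht : t ∈ Icc (0:ℝ) 1) (hz : ∀ j, 0 ≤ z j)
    (hs : ∑ j, z j = 1) :
    0 ≤ ∑ j, lE q r β z t j * (z j - 1/(q:ℝ)) := by
  have hmono : MonovaryOn (lE q r β z t) (fun j => z j - 1/(q:ℝ)) (Finset.univ : Finset (Fin q)) := by
    intro i _ j _ hij
    simp only at hij
    have hw : lw q z t i ≤ lw q z t j := by
      rw [lw, lw]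
      nlinarith [ht.1]
    have hwi : 0 ≤ lw q z t i := lw_nonneg ht hz i
    rw [lE, lE]
    exact Real.exp_le_exp.mpr (mul_le_mul_of_nonneg_left
      (pow_le_pow_left₀ hwi hw _) hβ)
  have h := hmono.sum_mul_sum_le_card_mul_sum
  rw [sum_b hq hs, mul_zero] at h
  have hc : ((Finset.univ : Finset (Fin q)).card : ℝ) = (q:ℝ) := by simp
  rw [hc] at h
  have hq' : (0:ℝ) < (q:ℝ) := Nat.cast_pos.mpr hq
  nlinarith [h]

lemma lG_nonpos (hq : 0 < q) (hβ : 0 ≤ β) (ht : t ∈ Icc (0:ℝ) 1)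
    (hz : ∀ j, 0 ≤ z j) (hs : ∑ j, z j = 1) (hk : z k - 1/(q:ℝ) ≤ 0) :
    lG q r β z k t ≤ 0 := by
  have hS := lS_pos (q := q) (r := r) (β := β) (z := z) (t := t) hq
  have h1 : (lw q z t k)^(r-2) * (z k - 1/(q:ℝ)) ≤ 0 :=
    mul_nonpos_of_nonneg_of_nonpos (pow_nonneg (lw_nonneg ht hz k) _) hk
  have h2 : 0 ≤ ∑ j, (lE q r β z t j / lS q r β z t) * ((lw q z t j)^(r-2) * (z j - 1/(q:ℝ))) := by
    have hstep : ∀ j : Fin q, (lE q r β z t j / lS q r β z t) * ((1/(q:ℝ))^(r-2) * (z j - 1/(q:ℝ)))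
        ≤ (lE q r β z t j / lS q r β z t) * ((lw q z t j)^(r-2) * (z j - 1/(q:ℝ))) := by
      intro j
      have hp : 0 ≤ lE q r β z t j / lS q r β z t := le_of_lt (div_pos (lE_pos j) hS)
      refine mul_le_mul_of_nonneg_left ?_ hp
      rcases le_or_gt 0 (z j - 1/(q:ℝ)) with hb | hb
      · refine mul_le_mul_of_nonneg_right ?_ hb
        refine pow_le_pow_left₀ (by positivity) ?_ _
        rw [lw]; nlinarith [ht.1]
      · refine mul_le_mul_of_nonpos_right ?_ hb.le
        refine pow_le_pow_left₀ (lw_nonneg ht hz j) ?_ _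
        rw [lw]; nlinarith [ht.1]
    calc (0:ℝ) ≤ ∑ j, (lE q r β z t j / lS q r β z t) * ((1/(q:ℝ))^(r-2) * (z j - 1/(q:ℝ))) := by
          have he : ∑ j, (lE q r β z t j / lS q r β z t) * ((1/(q:ℝ))^(r-2) * (z j - 1/(q:ℝ)))
              = (1/(q:ℝ))^(r-2) / lS q r β z t * ∑ j, lE q r β z t j * (z j - 1/(q:ℝ)) := by
            rw [Finset.mul_sum]
            exact Finset.sum_congr rfl fun j _ => by ring
          rw [he]
          exact mul_nonneg (by positivity) (sum_Eb_nonneg hq hβ ht hz hs)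
      _ ≤ _ := Finset.sum_le_sum fun j _ => hstep j
  have hG : lG q r β z k t = (lw q z t k)^(r-2) * (z k - 1/(q:ℝ))
      - ∑ j, (lE q r β z t j / lS q r β z t) * ((lw q z t j)^(r-2) * (z j - 1/(q:ℝ))) := by
    rw [lG, lM]
    simp only [lp, lc]
  rw [hG]
  linarith

set_option maxHeartbeats 1000000 in
lemma keyIneq (m : ℕ) {a x w : ℝ} (ha : 0 < a) (hax : a < x) (hw : 0 < w) :
    x^m*(x-a)^2 - ((x-a)*(((m:ℝ)+2)*x - (m:ℝ)*a) / (x*(((m:ℝ)+2)*x - ((m:ℝ)+1)*a)))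
        * (x^(m+1)*(x-a))
      ≤ w^m*(w-a)^2 - ((x-a)*(((m:ℝ)+2)*x - (m:ℝ)*a) / (x*(((m:ℝ)+2)*x - ((m:ℝ)+1)*a)))
        * (w^(m+1)*(w-a)) := by
  have hx : 0 < x := ha.trans hax
  have hm : (0:ℝ) ≤ (m:ℝ) := Nat.cast_nonneg m
  have hmx : (0:ℝ) ≤ (m:ℝ)*(x-a) := mul_nonneg hm (sub_nonneg.mpr hax.le)
  have hA : 0 < x*(((m:ℝ)+2)*x - ((m:ℝ)+1)*a) :=
    mul_pos hx (by nlinarith)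
  set L : ℝ := (x-a)*(((m:ℝ)+2)*x - (m:ℝ)*a) / (x*(((m:ℝ)+2)*x - ((m:ℝ)+1)*a)) with hLdef
  have hL0 : 0 < L := div_pos (mul_pos (sub_pos.mpr hax) (by nlinarith)) hA
  have hL1 : L < 1 := by
    rw [hLdef, div_lt_one hA]
    nlinarith [mul_pos ha hx, mul_nonneg (mul_nonneg ha.le hm) (sub_nonneg.mpr hax.le)]
  set P : ℝ → ℝ := fun u => u^m*(u-a)^2 - L*(u^(m+1)*(u-a)) with hPdef
  set Q : ℝ → ℝ := fun u => (m:ℝ)*(u-a)^2 + 2*u*(u-a) - L*(((m:ℝ)+1)*u*(u-a) + u^2) with hQdef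
  have hPderiv : ∀ u : ℝ, HasDerivAt P
      ((m:ℝ)*u^(m-1)*(u-a)^2 + u^m*(2*(u-a))
        - L*((((m:ℝ)+1)*u^m)*(u-a) + u^(m+1))) u := by
    intro u
    have h1 : HasDerivAt (fun u : ℝ => u ^ m) ((m:ℝ)*u^(m-1)) u := by
      simpa using (hasDerivAt_pow m u)
    have h2 : HasDerivAt (fun u : ℝ => (u-a)^2) (2*(u-a)) u := by
      have := ((hasDerivAt_id u).sub_const a).fun_pow 2
      simpa using this
    have h3 : HasDerivAt (fun u : ℝ => u ^ (m+1)) (((m:ℝ)+1)*u^m) u := by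
      simpa using (hasDerivAt_pow (m+1) u)
    have h4 : HasDerivAt (fun u : ℝ => u - a) 1 u := (hasDerivAt_id u).sub_const a
    have h5 := (h1.fun_mul h2)
    have h6 := ((h3.fun_mul h4).const_mul L)
    have := h5.fun_sub h6
    refine this.congr_deriv ?_
    ring
  have hPdiff : Differentiable ℝ P := fun u => (hPderiv u).differentiableAt
  have hPQ : ∀ u : ℝ, 0 < u → deriv P u * u = u^m * Q u := by
    intro u hu
    rw [(hPderiv u).deriv, hQdef]
    have hmm : (m:ℝ)*u^(m-1)*u = (m:ℝ)*u^m := by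
      cases m with
      | zero => simp
      | succ n => rw [Nat.succ_sub_one]; push_cast; ring
    rw [pow_succ]
    linear_combination (u-a)^2 * hmm
  have hQa : Q a = -(L*a^2) := by rw [hQdef]; ring
  have hQx : Q x = 0 := by
    rw [hQdef, hLdef]
    have hB : x*((m:ℝ)+2) - a*((m:ℝ)+1) ≠ 0 := (by nlinarith : (0:ℝ) < x*((m:ℝ)+2) - a*((m:ℝ)+1)).ne'
    field_simp
    ring
  have hQneg : ∀ u ∈ Icc a x, Q u ≤ 0 := by
    intro u hu
    have hid : Q u * (x - a) = (x - u) * Q a + (u - a) * Q x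
        - ((m:ℝ)+2)*(1-L)*(u-a)*(x-u)*(x-a) := by
      rw [hQdef]; ring
    rw [hQa, hQx] at hid
    have h2 : (0:ℝ) ≤ 1 - L := by linarith
    have h1 : 0 ≤ ((m:ℝ)+2)*(1-L)*(u-a)*(x-u)*(x-a) :=
      mul_nonneg (mul_nonneg (mul_nonneg (mul_nonneg (by positivity) h2)
        (sub_nonneg.mpr hu.1)) (sub_nonneg.mpr hu.2)) (sub_nonneg.mpr hax.le)
    have e1 : 0 ≤ (x-u) * (L*a^2) :=
      mul_nonneg (sub_nonneg.mpr hu.2) (mul_nonneg hL0.le (sq_nonneg a))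
    have hQu : Q u * (x-a) ≤ 0 := by rw [hid]; linarith [e1, h1]
    exact le_of_mul_le_mul_right (by simpa using hQu) (sub_pos.mpr hax)
  have hQpos : ∀ u, x ≤ u → 0 ≤ Q u := by
    intro u hu
    have hid : Q u * (x - a) = Q x * (x-a) + (u-x)*(Q x - Q a)
        + ((m:ℝ)+2)*(1-L)*(u-x)*(u-a)*(x-a) := by
      rw [hQdef]; ring
    rw [hQa, hQx] at hid
    have h2 : (0:ℝ) ≤ 1 - L := by linarith
    have h1 : 0 ≤ ((m:ℝ)+2)*(1-L)*(u-x)*(u-a)*(x-a) :=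
      mul_nonneg (mul_nonneg (mul_nonneg (mul_nonneg (by positivity) h2)
        (sub_nonneg.mpr hu)) (sub_nonneg.mpr (hax.le.trans hu))) (sub_nonneg.mpr hax.le)
    have e1 : 0 ≤ (u-x) * (L*a^2) :=
      mul_nonneg (sub_nonneg.mpr hu) (mul_nonneg hL0.le (sq_nonneg a))
    have hQu : 0 ≤ Q u * (x-a) := by rw [hid]; linarith [e1, h1]
    exact le_of_mul_le_mul_right (by simpa using hQu) (sub_pos.mpr hax)
  have hanti : AntitoneOn P (Icc a x) := by
    apply antitoneOn_of_deriv_nonpos (convex_Icc a x) hPdiff.continuous.continuousOn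
      hPdiff.differentiableOn
    intro u hu
    rw [interior_Icc] at hu
    have hu0 : 0 < u := ha.trans hu.1
    have h1 := hPQ u hu0
    have h2 : u^m * Q u ≤ 0 :=
      mul_nonpos_of_nonneg_of_nonpos (pow_nonneg hu0.le m) (hQneg u ⟨hu.1.le, hu.2.le⟩)
    nlinarith
  have hmono : MonotoneOn P (Ici x) := by
    apply monotoneOn_of_deriv_nonneg (convex_Ici x) hPdiff.continuous.continuousOn
      hPdiff.differentiableOn
    intro u hu
    rw [interior_Ici] at hu
    have hu0 : 0 < u := hx.trans hu
    have h1 := hPQ u hu0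
    have h2 : 0 ≤ u^m * Q u := mul_nonneg (pow_nonneg hu0.le m) (hQpos u hu.le)
    nlinarith
  show P x ≤ P w
  rcases le_or_gt w a with hwa | haw
  · have hbr : (x - a) ≤ L * x := by
      rw [hLdef, div_mul_eq_mul_div, le_div_iff₀ hA]
      nlinarith [mul_nonneg (mul_nonneg hx.le (sub_nonneg.mpr hax.le)) ha.le]
    have hPx : P x ≤ 0 := by
      have hpx_eq : P x = x^m*(x-a)^2 - L*(x^(m+1)*(x-a)) := rfl
      rw [hpx_eq, pow_succ x m]
      have hxm : 0 ≤ x^m := pow_nonneg hx.le m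
      have hkey := mul_le_mul_of_nonneg_left hbr
        (mul_nonneg hxm (sub_nonneg.mpr hax.le))
      nlinarith [hkey]
    have hPw : 0 ≤ P w := by
      have hpw_eq : P w = w^m*(w-a)^2 - L*(w^(m+1)*(w-a)) := rfl
      rw [hpw_eq]
      have h1 : 0 ≤ w^m*(w-a)^2 := by positivity
      have h2 : L*(w^(m+1)*(w-a)) ≤ 0 :=
        mul_nonpos_of_nonneg_of_nonpos hL0.le
          (mul_nonpos_of_nonneg_of_nonpos (pow_pos hw (m+1)).le (by linarith))
      linarith
    linarith
  · rcases le_or_gt w x with hwx | hxw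
    · exact hanti ⟨haw.le, hwx⟩ ⟨hax.le, le_refl x⟩ hwx
    · exact hmono (le_refl x) hxw.le hxw.le


set_option maxHeartbeats 1600000 in
lemma lG_hasDerivAt (hq : 0 < q) (t : ℝ) :
    HasDerivAt (lG q r β z k) (lGd q r β z k t) t := by
  have hS : lS q r β z t ≠ 0 := (lS_pos hq).ne'
  have hc : ∀ j : Fin q, HasDerivAt (fun t => lc q r z t j)
      ((((r-2:ℕ):ℝ) * (lw q z t j)^(r-2-1) * (z j - 1/(q:ℝ))) * (z j - 1/(q:ℝ))) t := by
    intro j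
    have := (lwpow_hasDerivAt (z := z) (t := t) j (r-2)).mul_const (z j - 1/(q:ℝ))
    exact this
  have hh : ∀ j : Fin q, HasDerivAt
      (fun t => lp q r β z t j * lc q r z t j)
      (((lE q r β z t j * (β * (((r-1:ℕ):ℝ) * (lw q z t j)^(r-2) * (z j - 1/(q:ℝ)))) * lS q r β z t
          - lE q r β z t j * (∑ l, lE q r β z t l * (β * (((r-1:ℕ):ℝ) * (lw q z t l)^(r-2) * (z l - 1/(q:ℝ))))))
          / (lS q r β z t)^2) * lc q r z t j
        + lp q r β z t j
          * ((((r-2:ℕ):ℝ) * (lw q z t j)^(r-2-1) * (z j - 1/(q:ℝ))) * (z j - 1/(q:ℝ)))) t :=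
    fun j => (HasDerivAt.div (lE_hasDerivAt j) lS_hasDerivAt hS).mul (hc j)
  have hG : HasDerivAt (fun t => lc q r z t k - ∑ j, lp q r β z t j * lc q r z t j)
      (((((r-2:ℕ):ℝ) * (lw q z t k)^(r-2-1) * (z k - 1/(q:ℝ))) * (z k - 1/(q:ℝ)))
        - ∑ j, (((lE q r β z t j * (β * (((r-1:ℕ):ℝ) * (lw q z t j)^(r-2) * (z j - 1/(q:ℝ)))) * lS q r β z t
          - lE q r β z t j * (∑ l, lE q r β z t l * (β * (((r-1:ℕ):ℝ) * (lw q z t l)^(r-2) * (z l - 1/(q:ℝ))))))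
          / (lS q r β z t)^2) * lc q r z t j
        + lp q r β z t j
          * ((((r-2:ℕ):ℝ) * (lw q z t j)^(r-2-1) * (z j - 1/(q:ℝ))) * (z j - 1/(q:ℝ))))) t :=
    (hc k).sub (HasDerivAt.fun_sum (fun (j : Fin q) _ => hh j))
  have hfun : lG q r β z k = fun t => lc q r z t k - ∑ j, lp q r β z t j * lc q r z t j := rfl
  rw [hfun]
  convert hG using 1
  rw [lGd]
  have hSM : ∑ l, lE q r β z t l * lc q r z t l = lS q r β z t * lM q r β z t := by
    rw [lM, Finset.mul_sum]
    refine Finset.sum_congr rfl fun l _ => ?_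
    rw [lp]
    field_simp
  have hS' : ∑ l, lE q r β z t l * (β * (((r-1:ℕ):ℝ) * (lw q z t l)^(r-2) * (z l - 1/(q:ℝ))))
      = β * ((r-1:ℕ):ℝ) * (lS q r β z t * lM q r β z t) := by
    rw [← hSM, Finset.mul_sum]
    refine Finset.sum_congr rfl fun l _ => ?_
    simp only [lc]
    ring
  congr 1
  · ring
  · refine Finset.sum_congr rfl fun j _ => ?_
    rw [hS']
    simp only [lp, lc]
    field_simp

set_option maxHeartbeats 1600000 in
lemma lGd_neg (hq : 0 < q) (hβ : 0 < β) (hz : ∀ j, 0 ≤ z j)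
    (hs : ∑ j, z j = 1) (hk : 1/(q:ℝ) < z k) (ht : t ∈ Ioo (0:ℝ) 1)
    (hr : 2 ≤ r) (hzero : lG q r β z k t = 0) :
    lGd q r β z k t < 0 := by
  have hqR : (0:ℝ) < (q:ℝ) := Nat.cast_pos.mpr hq
  have ha : (0:ℝ) < 1/(q:ℝ) := by positivity
  have hS : (0:ℝ) < lS q r β z t := lS_pos hq
  have hppos : ∀ j, 0 < lp q r β z t j := lp_pos hq
  have hpsum : ∑ j, lp q r β z t j = 1 := lp_sum hq
  have hMc : ∑ j, lp q r β z t j * lc q r z t j = lc q r z t k := by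
    have h0 : lG q r β z k t = lc q r z t k - ∑ j, lp q r β z t j * lc q r z t j := rfl
    rw [hzero] at h0
    linarith
  have hw0 : ∀ j, 0 < lw q z t j := by
    intro j
    rw [lw]
    nlinarith [hz j, ht.1, ht.2]
  have hwk : 1/(q:ℝ) < lw q z t k := by
    rw [lw]
    nlinarith [ht.1]
  have hck : 0 < lc q r z t k := by
    simp only [lc]
    exact mul_pos (pow_pos (hw0 k) _) (by linarith)
  obtain ⟨j0, hj0⟩ : ∃ j, z j - 1/(q:ℝ) < 0 := by
    by_contra hno
    push_neg at hno
    have h1 : (z k - 1/(q:ℝ)) ≤ ∑ j, (z j - 1/(q:ℝ)) :=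
      Finset.single_le_sum (f := fun j => z j - 1/(q:ℝ)) (fun j _ => hno j) (Finset.mem_univ k)
    rw [sum_b hq hs] at h1
    linarith
  have hcj0 : lc q r z t j0 ≤ 0 := by
    simp only [lc]
    exact mul_nonpos_of_nonneg_of_nonpos (pow_nonneg (hw0 j0).le _) hj0.le
  have hvar_eq : ∑ j, lp q r β z t j * (lc q r z t j - lc q r z t k)^2
      = ∑ j, lp q r β z t j * (lc q r z t j)^2 - (lc q r z t k)^2 := by
    have he : ∀ j : Fin q, lp q r β z t j * (lc q r z t j - lc q r z t k)^2
        = lp q r β z t j * (lc q r z t j)^2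
          - 2*(lc q r z t k)*(lp q r β z t j * lc q r z t j)
          + (lc q r z t k)^2 * lp q r β z t j := fun j => by ring
    rw [Finset.sum_congr rfl (fun j _ => he j), Finset.sum_add_distrib,
      Finset.sum_sub_distrib, ← Finset.mul_sum, ← Finset.mul_sum, hMc, hpsum]
    ring
  have hvar : 0 < ∑ j, lp q r β z t j * (lc q r z t j - lc q r z t k)^2 := by
    refine Finset.sum_pos' (fun j _ => mul_nonneg (hppos j).le (sq_nonneg _))
      ⟨j0, Finset.mem_univ _, ?_⟩
    have hne : lc q r z t j0 - lc q r z t k ≠ 0 := by linarith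
    exact mul_pos (hppos j0) (pow_two_pos_of_ne_zero hne)
  -- the tangent-line bound
  have hB1 : ((r-2:ℕ):ℝ) * (lw q z t k)^(r-2-1) * (z k - 1/(q:ℝ))^2
      ≤ ∑ j, lp q r β z t j * (((r-2:ℕ):ℝ) * (lw q z t j)^(r-2-1) * (z j - 1/(q:ℝ))^2) := by
    rcases Nat.lt_or_ge r 3 with h3 | h3
    · have h0 : r - 2 = 0 := by omega
      simp [h0]
    · obtain ⟨m, hm⟩ : ∃ m, r - 2 = m + 1 := ⟨r - 3, by omega⟩
      have hm1 : r - 2 - 1 = m := by omega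
      have hcast : ((r-2:ℕ):ℝ) = (m:ℝ)+1 := by rw [hm]; push_cast; ring
      set x := lw q z t k with hxdef
      set L : ℝ := (x-1/(q:ℝ))*(((m:ℝ)+2)*x - (m:ℝ)*(1/(q:ℝ)))
          / (x*(((m:ℝ)+2)*x - ((m:ℝ)+1)*(1/(q:ℝ)))) with hLdef
      have hwma : ∀ j, lw q z t j - 1/(q:ℝ) = t * (z j - 1/(q:ℝ)) := by
        intro j; rw [lw]; ring
      have hkey2 : ∀ j : Fin q,
          x^m*(t^2*(z k - 1/(q:ℝ))^2) - L*t*(lc q r z t k)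
          ≤ (lw q z t j)^m*(t^2*(z j - 1/(q:ℝ))^2) - L*t*(lc q r z t j) := by
        intro j
        have h := keyIneq m ha hwk (hw0 j)
        rw [← hLdef] at h
        rw [hwma j, hwma k] at h
        have hck' : x^(m+1)*(t*(z k - 1/(q:ℝ))) = t * lc q r z t k := by
          simp only [lc, ← hm, hxdef]; ring
        have hcj' : (lw q z t j)^(m+1)*(t*(z j - 1/(q:ℝ))) = t * lc q r z t j := by
          simp only [lc, ← hm]; ring
        calc x^m*(t^2*(z k - 1/(q:ℝ))^2) - L*t*(lc q r z t k)
            = x^m*(t*(z k - 1/(q:ℝ)))^2 - L*(x^(m+1)*(t*(z k - 1/(q:ℝ)))) := by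
              rw [hck']; ring
          _ ≤ (lw q z t j)^m*(t*(z j - 1/(q:ℝ)))^2
              - L*((lw q z t j)^(m+1)*(t*(z j - 1/(q:ℝ)))) := h
          _ = (lw q z t j)^m*(t^2*(z j - 1/(q:ℝ))^2) - L*t*(lc q r z t j) := by
              rw [hcj']; ring
      have hsum : ∑ j, lp q r β z t j
            * (x^m*(t^2*(z k - 1/(q:ℝ))^2) - L*t*(lc q r z t k))
          ≤ ∑ j, lp q r β z t j
            * ((lw q z t j)^m*(t^2*(z j - 1/(q:ℝ))^2) - L*t*(lc q r z t j)) :=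
        Finset.sum_le_sum
          (fun (j : Fin q) _ => mul_le_mul_of_nonneg_left (hkey2 j) (hppos j).le)
      rw [← Finset.sum_mul, hpsum, one_mul] at hsum
      have hr1 : ∑ j, lp q r β z t j
            * ((lw q z t j)^m*(t^2*(z j - 1/(q:ℝ))^2) - L*t*(lc q r z t j))
          = ∑ j, lp q r β z t j * ((lw q z t j)^m*(t^2*(z j - 1/(q:ℝ))^2))
            - L*t*(lc q r z t k) := by
        have he : ∀ j : Fin q, lp q r β z t j
              * ((lw q z t j)^m*(t^2*(z j - 1/(q:ℝ))^2) - L*t*(lc q r z t j))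
            = lp q r β z t j * ((lw q z t j)^m*(t^2*(z j - 1/(q:ℝ))^2))
              - (L*t)*(lp q r β z t j * lc q r z t j) := fun j => by ring
        rw [Finset.sum_congr rfl (fun j _ => he j), Finset.sum_sub_distrib,
          ← Finset.mul_sum, hMc]
      rw [hr1] at hsum
      have ht2 : (0:ℝ) < t^2 := by nlinarith [ht.1]
      have hfin : x^m*(z k - 1/(q:ℝ))^2
          ≤ ∑ j, lp q r β z t j * ((lw q z t j)^m*(z j - 1/(q:ℝ))^2) := by
        have h2 : (x^m*(z k - 1/(q:ℝ))^2) * t^2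
            ≤ (∑ j, lp q r β z t j * ((lw q z t j)^m*(z j - 1/(q:ℝ))^2)) * t^2 := by
          calc (x^m*(z k - 1/(q:ℝ))^2)*t^2
              = x^m*(t^2*(z k - 1/(q:ℝ))^2) := by ring
            _ ≤ ∑ j, lp q r β z t j * ((lw q z t j)^m*(t^2*(z j - 1/(q:ℝ))^2)) := by
                linarith [hsum]
            _ = (∑ j, lp q r β z t j * ((lw q z t j)^m*(z j - 1/(q:ℝ))^2)) * t^2 := by
                rw [Finset.sum_mul]
                exact Finset.sum_congr rfl fun j _ => by ring
        exact le_of_mul_le_mul_right h2 ht2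
      rw [hcast, hm1]
      calc ((m:ℝ)+1) * x^m * (z k - 1/(q:ℝ))^2
          ≤ ((m:ℝ)+1) * ∑ j, lp q r β z t j * ((lw q z t j)^m*(z j - 1/(q:ℝ))^2) := by
            have : (0:ℝ) ≤ (m:ℝ)+1 := by positivity
            nlinarith [hfin]
        _ = ∑ j, lp q r β z t j * (((m:ℝ)+1) * (lw q z t j)^m * (z j - 1/(q:ℝ))^2) := by
            rw [Finset.mul_sum]
            exact Finset.sum_congr rfl fun j _ => by ring
  -- assemble
  have hsplit : lGd q r β z k t
      = (((r-2:ℕ):ℝ) * (lw q z t k)^(r-2-1) * (z k - 1/(q:ℝ))^2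
          - ∑ j, lp q r β z t j * (((r-2:ℕ):ℝ) * (lw q z t j)^(r-2-1) * (z j - 1/(q:ℝ))^2))
        - β*((r-1:ℕ):ℝ) * (∑ j, lp q r β z t j * (lc q r z t j)^2 - (lc q r z t k)^2) := by
    rw [lGd]
    have hMck : lM q r β z t = lc q r z t k := by rw [lM, hMc]
    rw [hMck, Finset.sum_add_distrib]
    have hA : ∑ j, lp q r β z t j * (β * ((r-1:ℕ):ℝ)) * (lc q r z t j - lc q r z t k) * lc q r z t j
        = β*((r-1:ℕ):ℝ) * (∑ j, lp q r β z t j * (lc q r z t j)^2 - (lc q r z t k)^2) := by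
      have he : ∀ j : Fin q,
          lp q r β z t j * (β * ((r-1:ℕ):ℝ)) * (lc q r z t j - lc q r z t k) * lc q r z t j
          = (β*((r-1:ℕ):ℝ)) * (lp q r β z t j * (lc q r z t j)^2)
            - (β*((r-1:ℕ):ℝ)*(lc q r z t k)) * (lp q r β z t j * lc q r z t j) := fun j => by ring
      rw [Finset.sum_congr rfl (fun j _ => he j), Finset.sum_sub_distrib,
        ← Finset.mul_sum, ← Finset.mul_sum, hMc]
      ring
    rw [hA]
    ring
  rw [hsplit]
  have hkpos : (0:ℝ) < β*((r-1:ℕ):ℝ) := by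
    have : (1:ℝ) ≤ ((r-1:ℕ):ℝ) := by
      have : 1 ≤ r - 1 := by omega
      exact_mod_cast this
    nlinarith
  have hV : 0 < ∑ j, lp q r β z t j * (lc q r z t j)^2 - (lc q r z t k)^2 := by
    rw [← hvar_eq]; exact hvar
  linarith [hB1, mul_pos hkpos hV]

/-- somewhere strictly after a simple zero with negative derivative the function is negative,
and the sup-of-nonpositive-set argument gives uniqueness of zeros. -/
lemma unique_zero {G Gd : ℝ → ℝ} (hd : ∀ t, HasDerivAt G (Gd t) t)
    (hneg : ∀ t ∈ Ioo (0:ℝ) 1, G t = 0 → Gd t < 0)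
    {t₁ t₂ : ℝ} (h1m : t₁ ∈ Ioo (0:ℝ) 1) (h2m : t₂ ∈ Ioo (0:ℝ) 1)
    (h1 : G t₁ = 0) (h2 : G t₂ = 0) : t₁ = t₂ := by
  have hGc : Continuous G := by
    have : Differentiable ℝ G := fun t => (hd t).differentiableAt
    exact this.continuous
  -- key: for any zero T in (0,1), eventually G < 0 strictly to the right
  have hright : ∀ T ∈ Ioo (0:ℝ) 1, G T = 0 → ∀ᶠ u in nhdsWithin T (Ioi T), G u < 0 := by
    intro T hT hGT
    have htend := hasDerivAt_iff_tendsto_slope.mp (hd T)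
    have hev : ∀ᶠ u in nhdsWithin T {T}ᶜ, slope G T u < 0 :=
      htend.eventually_lt_const (hneg T hT hGT)
    have hsub : Ioi T ⊆ {T}ᶜ := fun u hu => by
      simp only [mem_compl_iff, mem_singleton_iff]
      exact LT.lt.ne' hu
    have hev' : ∀ᶠ u in nhdsWithin T (Ioi T), slope G T u < 0 :=
      hev.filter_mono (nhdsWithin_mono T hsub)
    filter_upwards [hev', self_mem_nhdsWithin] with u hu hmem
    rw [slope_def_field, hGT, sub_zero] at hu
    rcases div_neg_iff.mp hu with ⟨hp, hn⟩ | ⟨hn, hp⟩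
    · exfalso; rw [mem_Ioi] at hmem; linarith
    · exact hn
  -- similarly, eventually G > 0 strictly to the left of a zero
  have hleft : ∀ T ∈ Ioo (0:ℝ) 1, G T = 0 → ∀ᶠ u in nhdsWithin T (Iio T), 0 < G u := by
    intro T hT hGT
    have htend := hasDerivAt_iff_tendsto_slope.mp (hd T)
    have hev : ∀ᶠ u in nhdsWithin T {T}ᶜ, slope G T u < 0 :=
      htend.eventually_lt_const (hneg T hT hGT)
    have hsub : Iio T ⊆ {T}ᶜ := fun u hu => by
      simp only [mem_compl_iff, mem_singleton_iff]
      exact LT.lt.ne hu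
    have hev' : ∀ᶠ u in nhdsWithin T (Iio T), slope G T u < 0 :=
      hev.filter_mono (nhdsWithin_mono T hsub)
    filter_upwards [hev', self_mem_nhdsWithin] with u hu hmem
    rw [slope_def_field, hGT, sub_zero] at hu
    rcases div_neg_iff.mp hu with ⟨hp, hn⟩ | ⟨hn, hp⟩
    · exact hp
    · exfalso; rw [mem_Iio] at hmem; linarith
  -- main argument
  by_contra hne
  -- wlog t₁ < t₂
  wlog hlt : t₁ < t₂ generalizing t₁ t₂
  · exact this h2m h1m h2 h1 (Ne.symm hne)
      (lt_of_le_of_ne (not_lt.mp hlt) (Ne.symm hne))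
  -- find s ∈ (t₁,t₂) with G s < 0
  obtain ⟨s, hsneg, hsmem⟩ :=
    ((hright t₁ h1m h1).and (eventually_of_mem
      (Ioo_mem_nhdsGT_of_mem ⟨le_refl t₁, hlt⟩) (fun u hu => hu))).exists
  -- find s' ∈ (s,t₂) with 0 < G s'
  obtain ⟨s', hs'pos, hs'mem⟩ :=
    ((hleft t₂ h2m h2).and (eventually_of_mem
      (Ioo_mem_nhdsLT_of_mem ⟨hsmem.2, le_refl t₂⟩) (fun u hu => hu))).exists
  set A : Set ℝ := Icc s s' ∩ {u | G u ≤ 0} with hAdef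
  have hAcomp : IsCompact A := isCompact_Icc.inter_right (isClosed_le hGc continuous_const)
  have hAne : A.Nonempty := ⟨s, ⟨le_refl s, hs'mem.1.le⟩, hsneg.le⟩
  have hbdd : BddAbove A := hAcomp.bddAbove
  have hTmem := hAcomp.sSup_mem hAne
  set T := sSup A with hTdef
  obtain ⟨⟨hTs, hTs'⟩, hTnp⟩ := hTmem
  have hTnp' : G T ≤ 0 := hTnp
  have hTlt : T < s' := by
    rcases lt_or_eq_of_le hTs' with h | h
    · exact h
    · exfalso; rw [h] at hTnp'; linarith
  have hT01 : T ∈ Ioo (0:ℝ) 1 :=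
    ⟨lt_of_lt_of_le (lt_trans h1m.1 hsmem.1) hTs,
      lt_trans (lt_trans hTlt hs'mem.2) h2m.2⟩
  have hev : ∀ᶠ u in nhdsWithin T (Ioi T), G u < 0 := by
    rcases lt_or_eq_of_le hTnp' with hT0 | hT0
    · have hnn : ∀ᶠ u in nhds T, G u < 0 :=
        (hGc.tendsto T).eventually_lt_const hT0
      exact eventually_nhdsWithin_of_eventually_nhds hnn
    · exact hright T hT01 hT0
  obtain ⟨u, hu_neg, hu_mem⟩ := (hev.and (eventually_of_mem
    (Ioo_mem_nhdsGT_of_mem ⟨le_refl T, hTlt⟩) (fun x hx => hx))).exists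
  have huA : u ∈ A := ⟨⟨hTs.trans hu_mem.1.le, hu_mem.2.le⟩, hu_neg.le⟩
  have hle := le_csSup hbdd huA
  rw [← hTdef] at hle
  linarith [hu_mem.1]

end GCWP

open GCWP in
/-- **Behavior of `g_k^r` along straight lines to the equilibrium** (claims (a)
and (b) in the proof of Lemma 7.3 of the survey).  For `z ∈ P`, `z ≠ z_β`, and
`z(t) = (1−t)z_β + tz`:
(a) if `z_k ≤ 1/q` then `t ↦ g_k^r(z(t))` is monotonically decreasing on `[0,1]`;
(b) if `z_k > 1/q` then `t ↦ g_k^r(z(t))` has at most one critical point in `(0,1)`. -/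
theorem gcwp_line_monotonicity (q r : ℕ) (hq : 2 ≤ q) (hr : 2 ≤ r)
    (β : ℝ) (hβ : 0 < β) (z : Fin q → ℝ) (hz : z ∈ simplexP q) (hne : z ≠ zUnif q)
    (k : Fin q) :
    (z k ≤ 1 / (q : ℝ) →
      AntitoneOn (fun t : ℝ => gGCWP q r β ((1 - t) • zUnif q + t • z) k)
        (Set.Icc (0 : ℝ) 1)) ∧
    (1 / (q : ℝ) < z k →
      ∀ t₁ ∈ Set.Ioo (0 : ℝ) 1, ∀ t₂ ∈ Set.Ioo (0 : ℝ) 1,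
        deriv (fun s : ℝ => gGCWP q r β ((1 - s) • zUnif q + s • z) k) t₁ = 0 →
        deriv (fun s : ℝ => gGCWP q r β ((1 - s) • zUnif q + s • z) k) t₂ = 0 →
        t₁ = t₂) := by
  obtain ⟨hzge, hzsum⟩ := hz
  have hq0 : 0 < q := by omega
  have hfeq : (fun t : ℝ => gGCWP q r β ((1 - t) • zUnif q + t • z) k)
      = fun t => lE q r β z t k / lS q r β z t := by
    funext t
    have hpt : ((1 - t) • zUnif q + t • z) = lw q z t := by
      funext j
      simp only [Pi.add_apply, Pi.smul_apply, smul_eq_mul, zUnif, lw]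
      ring
    rw [hpt]
    rfl
  have hdiff : Differentiable ℝ (fun t => lE q r β z t k / lS q r β z t) :=
    fun u => (f_hasDerivAt hq0).differentiableAt
  constructor
  · intro hk
    rw [hfeq]
    apply antitoneOn_of_deriv_nonpos (convex_Icc 0 1) hdiff.continuous.continuousOn
      hdiff.differentiableOn
    intro x hx
    rw [interior_Icc] at hx
    rw [(f_hasDerivAt hq0).deriv]
    have hg := lG_nonpos (r := r) (k := k) hq0 hβ.le (Set.Ioo_subset_Icc_self hx) hzge hzsum (by linarith)
    have hf : 0 < lE q r β z x k / lS q r β z x := div_pos (lE_pos k) (lS_pos hq0)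
    have hbk : (0:ℝ) ≤ β * ((r-1:ℕ):ℝ) := mul_nonneg hβ.le (Nat.cast_nonneg _)
    exact mul_nonpos_of_nonneg_of_nonpos (mul_nonneg hbk hf.le) hg
  · intro hk t₁ h₁ t₂ h₂ hd₁ hd₂
    rw [hfeq] at hd₁ hd₂
    have hzero : ∀ {u : ℝ}, deriv (fun s => lE q r β z s k / lS q r β z s) u = 0 →
        lG q r β z k u = 0 := by
      intro u hu
      rw [(f_hasDerivAt hq0).deriv] at hu
      have h1 : (0:ℝ) < ((r-1:ℕ):ℝ) := by
        have h2 : 1 ≤ r - 1 := by omega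
        have h3 : (1:ℝ) ≤ ((r-1:ℕ):ℝ) := by exact_mod_cast h2
        linarith
      have hpos : (0:ℝ) < β * ((r-1:ℕ):ℝ) * (lE q r β z u k / lS q r β z u) :=
        mul_pos (mul_pos hβ h1) (div_pos (lE_pos k) (lS_pos hq0))
      rcases mul_eq_zero.mp hu with h | h
      · exact absurd h hpos.ne'
      · exact h
    exact GCWP.unique_zero (fun u => lG_hasDerivAt hq0 u)
      (fun u hu hG0 => lGd_neg hq0 hβ hzge hzsum hk hu hr hG0)
      h₁ h₂ (hzero hd₁) (hzero hd₂)

end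
end
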